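/- arXiv:1704.01535 — 3 statements merged into one kernel-verified Lean document; each statement's English description precedes it below -/
import Mathlib

section
/- For every bandwidth ratio τ > 0 and every ε ∈ (0,1), the optimal type 2 error probability satisfies limsup_{k→∞} (1/k)·log₂ β(k,τ,ε) ≤ −θ(τ). -/
open Filter Real

noncomputable section

namespace DHT

/-- Real-valued indicator of a proposition. -/
def ind (P : Prop) : ℝ := by classical exact if P then 1 else 0

/-- `p` is a probability mass function on the finite type `α`. -/
def IsPMF {α : Type*} [Fintype α] (p : α → ℝ) : Prop :=
  (∀ a, 0 ≤ p a) ∧ ∑ a, p a = 1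

/-- `f` is a stochastic kernel: every row is a pmf. -/
def IsKernel {α β : Type*} [Fintype β] (f : α → β → ℝ) : Prop :=
  ∀ a, (∀ b, 0 ≤ f a b) ∧ ∑ b, f a b = 1

/-- Pushforward of a pmf along a map. -/
def pushf {α β : Type*} [Fintype α] (p : α → ℝ) (f : α → β) : β → ℝ :=
  fun b => ∑ a, ind (f a = b) * p a

/-- Probability of a set under a pmf. -/
def probIn {α : Type*} [Fintype α] (p : α → ℝ) (A : Set α) : ℝ :=
  ∑ a, ind (a ∈ A) * p a

/-- Shannon entropy, in bits. -/
def entropy {α : Type*} [Fintype α] (p : α → ℝ) : ℝ :=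
  -∑ a, p a * Real.logb 2 (p a)

/-- Kullback–Leibler divergence, in bits. -/
def klDiv {α : Type*} [Fintype α] (p q : α → ℝ) : ℝ :=
  ∑ a, p a * Real.logb 2 (p a / q a)

/-- Conditional entropy `H(α | β)` of a joint pmf on `α × β`, in bits. -/
def condEntropy {α β : Type*} [Fintype α] [Fintype β] (p : α × β → ℝ) : ℝ :=
  -∑ x : α × β, p x * Real.logb 2 (p x / ∑ a, p (a, x.2))

/-- Mutual information `I(α;β)`, in bits. -/
def mutualInfo {α β : Type*} [Fintype α] [Fintype β] (p : α × β → ℝ) : ℝ :=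
  ∑ x : α × β, p x * Real.logb 2 (p x / ((∑ b, p (x.1, b)) * (∑ a, p (a, x.2))))

/-- Conditional mutual information `I(α;β|γ)`, in bits. -/
def condMI {α β γ : Type*} [Fintype α] [Fintype β] [Fintype γ] (p : α × β × γ → ℝ) : ℝ :=
  ∑ x : α × β × γ, p x * Real.logb 2
    (p x * (∑ a, ∑ b, p (a, b, x.2.2)) /
      ((∑ b, p (x.1, b, x.2.2)) * (∑ a, p (a, x.2.1, x.2.2))))

/-- Markov chain `α − β − γ`: the first and third components are conditionally
independent given the middle one. -/
def MarkovChain {α β γ : Type*} [Fintype α] [Fintype γ] (p : α × β × γ → ℝ) : Prop :=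
  ∀ a b c, p (a, b, c) * (∑ a', ∑ c', p (a', b, c')) =
    (∑ c', p (a, b, c')) * (∑ a', p (a', b, c))

/-- Shannon capacity of a discrete memoryless channel, in bits per use. -/
def capacity {X Y : Type*} [Fintype X] [Fintype Y] (Ch : X → Y → ℝ) : ℝ :=
  sSup {c | ∃ q : X → ℝ, IsPMF q ∧ c = mutualInfo (fun xy : X × Y => q xy.1 * Ch xy.1 xy.2)}

/-- Empirical distribution (type) of a length-`j` sequence. -/
def empDist {α : Type*} [Fintype α] {j : ℕ} (w : Fin j → α) : α → ℝ :=
  fun a => (∑ i, ind (w i = a)) / j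

/-- δ-typicality: the empirical distribution is within δ of `p` in every coordinate. -/
def IsTypical {α : Type*} [Fintype α] (p : α → ℝ) (δ : ℝ) {j : ℕ} (w : Fin j → α) : Prop :=
  ∀ a, |empDist w a - p a| ≤ δ

section System

variable {L : ℕ} {U X Y : Fin L → Type} {V Z : Type}
variable [∀ l, Fintype (U l)] [∀ l, Fintype (X l)] [∀ l, Fintype (Y l)]
variable [Fintype V] [Fintype Z]

/-- Joint pmf of the channel outputs `(Y₁ⁿ,…,Y_Lⁿ)`, `V^k` and `Z^k` induced by `k` i.i.d.
copies of the source `R`, the stochastic encoders `f` and the memoryless channels `Ch`. -/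
def inducedDist (R : (((l : Fin L) → U l) × V × Z) → ℝ)
    (Ch : (l : Fin L) → X l → Y l → ℝ) (k n : ℕ)
    (f : (l : Fin L) → (Fin k → U l) → (Fin n → X l) → ℝ) :
    (((l : Fin L) → Fin n → Y l) × (Fin k → V) × (Fin k → Z)) → ℝ :=
  fun yvz =>
    ∑ u : (l : Fin L) → Fin k → U l, ∑ x : (l : Fin L) → Fin n → X l,
      (∏ i : Fin k, R ((fun l => u l i), yvz.2.1 i, yvz.2.2 i)) *
        ((∏ l, f l (u l) (x l)) * ∏ l, ∏ j : Fin n, Ch l (x l j) (yvz.1 l j))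

/-- `P` and `Q` have the same single-variable marginals. -/
def SameMarginals (P Q : (((l : Fin L) → U l) × V × Z) → ℝ) : Prop :=
  (∀ (l : Fin L) (a : U l),
      (∑ x : ((l : Fin L) → U l) × V × Z, ind (x.1 l = a) * P x) =
        ∑ x : ((l : Fin L) → U l) × V × Z, ind (x.1 l = a) * Q x) ∧
  (∀ v : V, (∑ x : ((l : Fin L) → U l) × V × Z, ind (x.2.1 = v) * P x) =
      ∑ x : ((l : Fin L) → U l) × V × Z, ind (x.2.1 = v) * Q x) ∧
  (∀ z : Z, (∑ x : ((l : Fin L) → U l) × V × Z, ind (x.2.2 = z) * P x) =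
      ∑ x : ((l : Fin L) → U l) × V × Z, ind (x.2.2 = z) * Q x)

/-- Testing against conditional independence: `Q = P_{U_𝓛|Z} P_{V|Z} P_Z`. -/
def IsTACI (P Q : (((l : Fin L) → U l) × V × Z) → ℝ) : Prop :=
  ∀ x : ((l : Fin L) → U l) × V × Z,
    Q x = (∑ v : V, P (x.1, v, x.2.2)) * (∑ u : (l : Fin L) → U l, P (u, x.2.1, x.2.2)) /
      (∑ u : (l : Fin L) → U l, ∑ v : V, P (u, v, x.2.2))

/-- Optimal type-2 error probability `β(k,τ,ε)`. -/
def beta (P Q : (((l : Fin L) → U l) × V × Z) → ℝ)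
    (Ch : (l : Fin L) → X l → Y l → ℝ) (τ ε : ℝ) (k : ℕ) : ℝ :=
  sInf {b | ∃ n : ℕ, (n : ℝ) ≤ τ * k ∧
    ∃ f : (l : Fin L) → (Fin k → U l) → (Fin n → X l) → ℝ,
      (∀ l, IsKernel (f l)) ∧
      ∃ A : Set (((l : Fin L) → Fin n → Y l) × (Fin k → V) × (Fin k → Z)),
        probIn (inducedDist P Ch k n f) Aᶜ ≤ ε ∧
        b = probIn (inducedDist Q Ch k n f) A}

/-- `θ(k,τ)`. -/
def thetaK (P Q : (((l : Fin L) → U l) × V × Z) → ℝ)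
    (Ch : (l : Fin L) → X l → Y l → ℝ) (τ : ℝ) (k : ℕ) : ℝ :=
  sSup {d | ∃ n : ℕ, (n : ℝ) ≤ τ * k ∧
    ∃ f : (l : Fin L) → (Fin k → U l) → (Fin n → X l) → ℝ,
      (∀ l, IsKernel (f l)) ∧
      d = klDiv (inducedDist P Ch k n f) (inducedDist Q Ch k n f) / k}

/-- `θ(τ) = sup_{k ≥ 1} θ(k,τ)`. -/
def theta (P Q : (((l : Fin L) → U l) × V × Z) → ℝ)
    (Ch : (l : Fin L) → X l → Y l → ℝ) (τ : ℝ) : ℝ :=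
  sSup {d | ∃ k : ℕ, 1 ≤ k ∧ d = thetaK P Q Ch τ k}

/-- Optimal type-2 error exponent `κ(τ,ε)`. -/
def kappa (P Q : (((l : Fin L) → U l) × V × Z) → ℝ)
    (Ch : (l : Fin L) → X l → Y l → ℝ) (τ ε : ℝ) : ℝ :=
  sSup {κ : ℝ | 0 ≤ κ ∧ ∀ δ : ℝ, 0 < δ →
    Filter.limsup (fun k : ℕ => Real.logb 2 (beta P Q Ch τ ε k) / k) Filter.atTop ≤ -(κ - δ)}

/-- `I(V^k; Y₁ⁿ,…,Y_Lⁿ | Z^k)` of the induced distribution. -/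
def miVY (P : (((l : Fin L) → U l) × V × Z) → ℝ)
    (Ch : (l : Fin L) → X l → Y l → ℝ) (k n : ℕ)
    (f : (l : Fin L) → (Fin k → U l) → (Fin n → X l) → ℝ) : ℝ :=
  condMI (fun x : (Fin k → V) × ((l : Fin L) → Fin n → Y l) × (Fin k → Z) =>
    inducedDist P Ch k n f (x.2.1, x.1, x.2.2))

/-- `H(V^k | Y₁ⁿ,…,Y_Lⁿ, Z^k)` of the induced distribution. -/
def condEntV (P : (((l : Fin L) → U l) × V × Z) → ℝ)
    (Ch : (l : Fin L) → X l → Y l → ℝ) (k n : ℕ)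
    (f : (l : Fin L) → (Fin k → U l) → (Fin n → X l) → ℝ) : ℝ :=
  condEntropy (fun x : (Fin k → V) × (((l : Fin L) → Fin n → Y l) × (Fin k → Z)) =>
    inducedDist P Ch k n f (x.2.1, x.1, x.2.2))

/-- Probability of correct decoding in the `L`-helper JSCC problem. -/
def probCorrect (P : (((l : Fin L) → U l) × V × Z) → ℝ)
    (Ch : (l : Fin L) → X l → Y l → ℝ) (k n m : ℕ)
    (f : (l : Fin L) → (Fin k → U l) → (Fin n → X l) → ℝ)
    (φ : (Fin k → V) → Fin m)
    (g : Fin m × ((l : Fin L) → Fin n → Y l) × (Fin k → Z) → (Fin k → V)) : ℝ :=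
  ∑ w : ((l : Fin L) → Fin n → Y l) × (Fin k → V) × (Fin k → Z),
    ind (g (φ w.2.1, w.1, w.2.2) = w.2.1) * inducedDist P Ch k n f w

/-- Achievability of rate `R` in the `L`-helper JSCC problem with bandwidth ratio `τ`. -/
def JSCCAchievable (P : (((l : Fin L) → U l) × V × Z) → ℝ)
    (Ch : (l : Fin L) → X l → Y l → ℝ) (τ R : ℝ) : Prop :=
  ∀ lam : ℝ, 0 < lam → lam ≤ 1 →
    ∃ (nseq mseq : ℕ → ℕ) (δ : ℕ → ℝ)
      (f : (k : ℕ) → (l : Fin L) → (Fin k → U l) → (Fin (nseq k) → X l) → ℝ)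
      (φ : (k : ℕ) → (Fin k → V) → Fin (mseq k))
      (g : (k : ℕ) → Fin (mseq k) × ((l : Fin L) → Fin (nseq k) → Y l) × (Fin k → Z) →
        (Fin k → V)),
      (∀ k, 0 ≤ δ k) ∧ Filter.Tendsto δ Filter.atTop (nhds 0) ∧
      ∀ k : ℕ, 1 ≤ k →
        (nseq k : ℝ) ≤ τ * k ∧ 1 ≤ mseq k ∧ (∀ l, IsKernel (f k l)) ∧
        1 - lam ≤ probCorrect P Ch k (nseq k) (mseq k) (f k) (φ k) (g k) ∧
        Real.logb 2 (mseq k) / k ≤ R + δ k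

/-- Optimal rate `R(τ)` of the `L`-helper JSCC problem. -/
def Rjscc (P : (((l : Fin L) → U l) × V × Z) → ℝ)
    (Ch : (l : Fin L) → X l → Y l → ℝ) (τ : ℝ) : ℝ :=
  sInf {R | JSCCAchievable P Ch τ R}

/-- `R_k`: infimum of `H(V^k|Y^n,Z^k)/k` over block lengths `n ≤ τk` and encoders. -/
def Rk (P : (((l : Fin L) → U l) × V × Z) → ℝ)
    (Ch : (l : Fin L) → X l → Y l → ℝ) (τ : ℝ) (k : ℕ) : ℝ :=
  sInf {r | ∃ n : ℕ, (n : ℝ) ≤ τ * k ∧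
    ∃ f : (l : Fin L) → (Fin k → U l) → (Fin n → X l) → ℝ,
      (∀ l, IsKernel (f l)) ∧ r = condEntV P Ch k n f / k}

end System

section SingleObserver

variable {Uu Xx Yy V Z : Type}
variable [Fintype Uu] [Fintype Xx] [Fintype Yy] [Fintype V] [Fintype Z]

/-- Single-observer induced joint pmf of `(Yⁿ, V^k, Z^k)`. -/
def inducedDist1 (R : Uu × V × Z → ℝ) (Ch : Xx → Yy → ℝ) (k n : ℕ)
    (f : (Fin k → Uu) → (Fin n → Xx) → ℝ) :
    ((Fin n → Yy) × (Fin k → V) × (Fin k → Z)) → ℝ :=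
  fun yvz => ∑ u : Fin k → Uu, ∑ x : Fin n → Xx,
    (∏ i : Fin k, R (u i, yvz.2.1 i, yvz.2.2 i)) *
      (f u x * ∏ j : Fin n, Ch (x j) (yvz.1 j))

end SingleObserver

section Aux

variable {Uu V Z Wt : Type} [Fintype Uu] [Fintype V] [Fintype Z] [Fintype Wt]

/-- Markov chain `(Z,V) − U − W` for a joint pmf on `(U × V × Z) × W`. -/
def MarkovZVUW (J : (Uu × V × Z) × Wt → ℝ) : Prop :=
  MarkovChain (fun x : (Z × V) × Uu × Wt => J ((x.2.1, x.1.2, x.1.1), x.2.2))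

/-- `I(U;W|Z)` for a joint pmf on `(U × V × Z) × W`. -/
def miUW_Z (J : (Uu × V × Z) × Wt → ℝ) : ℝ :=
  condMI (fun x : Uu × Wt × Z => ∑ v, J ((x.1, v, x.2.2), x.2.1))

/-- `I(V;W|Z)` for a joint pmf on `(U × V × Z) × W`. -/
def miVW_Z (J : (Uu × V × Z) × Wt → ℝ) : ℝ :=
  condMI (fun x : V × Wt × Z => ∑ u, J ((u, x.1, x.2.2), x.2.1))

/-- `I(U;W|V,Z)` for a joint pmf on `(U × V × Z) × W`. -/
def miUW_VZ (J : (Uu × V × Z) × Wt → ℝ) : ℝ :=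
  condMI (fun x : Uu × Wt × (V × Z) => J ((x.1, x.2.2.1, x.2.2.2), x.2.1))

/-- `H(V|W,Z)` for a joint pmf on `(U × V × Z) × W`. -/
def entV_WZ (J : (Uu × V × Z) × Wt → ℝ) : ℝ :=
  condEntropy (fun x : V × (Wt × Z) => ∑ u, J ((u, x.1, x.2.2), x.2.1))

/-- `H(V|Z)` for a joint pmf on `U × V × Z`. -/
def entV_Z (P : Uu × V × Z → ℝ) : ℝ :=
  condEntropy (fun x : V × Z => ∑ u, P (u, x.1, x.2))

end Aux

/-!
Fix `k₀ ≥ 1`, `n₀ ≤ τ k₀` and encoders `f₀`, and let `p`, `q` be the output distributions they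
induce under `H₀` and `H₁`. For large `k`, running `f₀` on `m = ⌊k / k₀⌋` disjoint blocks and
ignoring the leftover symbols makes the block outputs i.i.d. with law `p`, resp. `q`. The
likelihood-ratio test with threshold `2^{m (D(p‖q) - δ)}` then has type 1 error at most `ε` by
Chebyshev's inequality, and type 2 error at most `2^{-m (D(p‖q) - δ)}`, so the limsup is at most
`-D(p‖q) / k₀`. Taking suprema gives `-θ(τ)`. Since `β ≤ 1` (send nothing and always accept),
the limsup is also `≤ 0`, and this covers the junk value `0` of `sSup` on unbounded sets.
-/

open Finset Topology

section Indicator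

variable {α β : Type*} [Fintype α] [Fintype β]

lemma ind_pos {P : Prop} (h : P) : ind P = 1 := by
  simp [ind, h]

lemma ind_neg {P : Prop} (h : ¬P) : ind P = 0 := by
  simp [ind, h]

lemma ind_nonneg (P : Prop) : 0 ≤ ind P := by
  unfold ind; split <;> norm_num

lemma ind_le_one (P : Prop) : ind P ≤ 1 := by
  unfold ind; split <;> norm_num

lemma sum_ind_eq_mul (a : α) (h : α → ℝ) : ∑ t, ind (t = a) * h t = h a := by
  classical
  simp [ind]

lemma probIn_nonneg {p : α → ℝ} (hp : ∀ a, 0 ≤ p a) (A : Set α) : 0 ≤ probIn p A :=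
  sum_nonneg fun a _ => mul_nonneg (ind_nonneg _) (hp a)

lemma probIn_le_one {p : α → ℝ} (hp : IsPMF p) (A : Set α) : probIn p A ≤ 1 := by
  rw [← hp.2]
  exact sum_le_sum fun a _ => mul_le_of_le_one_left (hp.1 a) (ind_le_one _)

lemma probIn_univ (p : α → ℝ) : probIn p Set.univ = ∑ a, p a := by
  simp [probIn, ind]

lemma probIn_empty (p : α → ℝ) : probIn p ∅ = 0 := by
  simp [probIn, ind]

lemma probIn_compl {p : α → ℝ} (hp : IsPMF p) (A : Set α) : probIn p Aᶜ = 1 - probIn p A := by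
  classical
  rw [← hp.2, eq_sub_iff_add_eq, probIn, probIn, ← sum_add_distrib]
  refine sum_congr rfl fun a _ => ?_
  by_cases h : a ∈ A <;> simp [ind, h]

lemma probIn_preimage (p : α → ℝ) (T : α → β) (S : Set β) :
    probIn p (T ⁻¹' S) = probIn (pushf p T) S := by
  classical
  simp only [probIn, pushf, mul_sum]
  rw [sum_comm]
  refine sum_congr rfl fun a _ => ?_
  rw [sum_eq_single (T a) (fun b _ hb => by simp [ind, Ne.symm hb]) (by simp)]
  by_cases h : T a ∈ S <;> simp [ind, h]

lemma const_mul_probIn_le {p q : α → ℝ} {c : ℝ} {A : Set α} (h : ∀ a ∈ A, c * p a ≤ q a) :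
    c * probIn p A ≤ probIn q A := by
  rw [probIn, mul_sum]
  refine sum_le_sum fun a _ => ?_
  by_cases ha : a ∈ A
  · simpa [ind_pos ha] using h a ha
  · simp [ind_neg ha]

lemma probIn_le_of_support {p : α → ℝ} (hp : ∀ a, 0 ≤ p a) {A B : Set α}
    (h : ∀ a ∈ A, p a ≠ 0 → a ∈ B) : probIn p A ≤ probIn p B := by
  refine sum_le_sum fun a _ => ?_
  by_cases ha : a ∈ A
  · by_cases hpa : p a = 0
    · simp [hpa]
    · rw [ind_pos ha, ind_pos (h a ha hpa)]
  · rw [ind_neg ha, zero_mul]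
    exact mul_nonneg (ind_nonneg _) (hp a)

lemma probIn_abs_ge_le_sum_mul_sq_div {p : α → ℝ} (hp : ∀ a, 0 ≤ p a) (h : α → ℝ) {s : ℝ}
    (hs : 0 < s) :
    probIn p {a | s ≤ |h a|} ≤ (∑ a, p a * h a ^ 2) / s ^ 2 := by
  rw [sum_div]
  refine sum_le_sum fun a _ => ?_
  by_cases ha : s ≤ |h a|
  · rw [ind_pos (show a ∈ {a | s ≤ |h a|} from ha), one_mul, le_div_iff₀ (by positivity),
      ← sq_abs (h a)]
    exact mul_le_mul_of_nonneg_left (pow_le_pow_left₀ hs.le ha 2) (hp a)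
  · rw [ind_neg (show a ∉ {a | s ≤ |h a|} from ha), zero_mul]
    exact div_nonneg (mul_nonneg (hp a) (sq_nonneg _)) (sq_nonneg _)

lemma probIn_likelihoodRatio_le {p q : α → ℝ} (hp : IsPMF p) {c : ℝ} (hc : 0 < c) :
    probIn q {a | c * q a ≤ p a} ≤ c⁻¹ := by
  rw [← one_div, le_div_iff₀ hc, mul_comm]
  exact (const_mul_probIn_le fun _ ha => ha).trans (probIn_le_one hp _)

lemma IsPMF.le_one {p : α → ℝ} (hp : IsPMF p) (a : α) : p a ≤ 1 :=
  hp.2 ▸ single_le_sum (fun b _ => hp.1 b) (mem_univ a)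

lemma exists_pos_mul_le {p q : α → ℝ} (hp : ∀ a, p a ≤ 1) (hq : ∀ a, 0 < q a) :
    ∃ c > 0, ∀ a, c * p a ≤ q a := by
  cases isEmpty_or_nonempty α
  · exact ⟨1, one_pos, fun a => isEmptyElim a⟩
  · obtain ⟨a₀, ha₀⟩ := Finite.exists_min q
    exact ⟨q a₀, hq a₀, fun a => (mul_le_of_le_one_right (hq a₀).le (hp a)).trans (ha₀ a)⟩

end Indicator

section Stein

variable {α : Type*}

def iid (p : α → ℝ) (m : ℕ) : (Fin m → α) → ℝ := fun w => ∏ b, p (w b)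

lemma iid_eq_rpow_mul {p q : α → ℝ} {m : ℕ} {w : Fin m → α} (hp : ∀ b, 0 < p (w b))
    (hq : ∀ b, 0 < q (w b)) :
    iid p m w = 2 ^ (∑ b, logb 2 (p (w b) / q (w b))) * iid q m w := by
  rw [rpow_sum_of_pos two_pos, iid, iid, ← prod_mul_distrib]
  refine prod_congr rfl fun b _ => ?_
  rw [rpow_logb two_pos (by norm_num) (div_pos (hp b) (hq b)), div_mul_cancel₀ _ (hq b).ne']

lemma sum_logb_lt_of_iid_lt {p q : α → ℝ} (hp : ∀ a, 0 ≤ p a) (hq : ∀ a, 0 ≤ q a)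
    (habs : ∀ a, q a = 0 → p a = 0) {m : ℕ} {w : Fin m → α} {t : ℝ} (hw : iid p m w ≠ 0)
    (hwt : iid p m w < 2 ^ t * iid q m w) : ∑ b, logb 2 (p (w b) / q (w b)) < t := by
  have hpw : ∀ b, 0 < p (w b) :=
    fun b => (hp _).lt_of_ne' (prod_ne_zero_iff.mp hw b (mem_univ b))
  have hqw : ∀ b, 0 < q (w b) := fun b => (hq _).lt_of_ne' fun h => (hpw b).ne' (habs _ h)
  rw [iid_eq_rpow_mul hpw hqw] at hwt
  exact (rpow_lt_rpow_left_iff one_lt_two).mp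
    (lt_of_mul_lt_mul_right hwt (prod_nonneg fun b _ => hq (w b)))

variable [Fintype α]

lemma sum_iid_mul_prod (p : α → ℝ) {m : ℕ} (h : Fin m → α → ℝ) :
    ∑ w, iid p m w * ∏ c, h c (w c) = ∏ c, ∑ a, p a * h c a := by
  classical
  simp only [iid, ← prod_mul_distrib]
  exact (Fintype.prod_sum fun c a => p a * h c a).symm

lemma IsPMF.iid {p : α → ℝ} (hp : IsPMF p) (m : ℕ) : IsPMF (iid p m) := by
  refine ⟨fun w => prod_nonneg fun b _ => hp.1 (w b), ?_⟩
  simpa [hp.2] using sum_iid_mul_prod p (m := m) fun _ _ => 1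

lemma sum_ind_fst_eq_mul_iid {β : Type*} [Fintype β] (p : α × β → ℝ) {m : ℕ} (a : Fin m → α) :
    ∑ w : Fin m → α × β, ind ((fun b => (w b).1) = a) * iid p m w = ∏ b, ∑ c, p (a b, c) := by
  classical
  rw [← (Equiv.arrowProdEquivProdArrow _ _ _).symm.sum_comp, Fintype.sum_prod_type]
  simp only [Equiv.arrowProdEquivProdArrow, Equiv.coe_fn_symm_mk, ← mul_sum]
  rw [sum_ind_eq_mul, Fintype.prod_sum]
  rfl

lemma sum_iid_mul_mul {p : α → ℝ} (hp : IsPMF p) {g : α → ℝ} (hg : ∑ a, p a * g a = 0)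
    {m : ℕ} (b b' : Fin m) :
    ∑ w, iid p m w * (g (w b) * g (w b')) = if b = b' then ∑ a, p a * g a ^ 2 else 0 := by
  classical
  have hfac : ∀ w : Fin m → α, g (w b) * g (w b') =
      ∏ c, (if c = b then g (w c) else 1) * (if c = b' then g (w c) else 1) := by
    intro w
    rw [prod_mul_distrib, prod_ite_eq', prod_ite_eq']
    simp
  simp only [hfac, sum_iid_mul_prod p fun c a => (if c = b then g a else 1) *
    (if c = b' then g a else 1)]
  split_ifs with hbb
  · subst hbb
    rw [prod_eq_single b (fun c _ hc => by simp [hc, hp.2]) (by simp)]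
    simp [sq]
  · exact prod_eq_zero (mem_univ b) (by simpa [hbb] using hg)

lemma sum_iid_mul_sum_sq {p : α → ℝ} (hp : IsPMF p) {g : α → ℝ} (hg : ∑ a, p a * g a = 0)
    (m : ℕ) : ∑ w, iid p m w * (∑ b, g (w b)) ^ 2 = m * ∑ a, p a * g a ^ 2 := by
  calc ∑ w, iid p m w * (∑ b, g (w b)) ^ 2
      = ∑ b, ∑ b', ∑ w, iid p m w * (g (w b) * g (w b')) := by
        simp only [sq, sum_mul_sum]
        simp only [mul_sum]
        rw [sum_comm]
        exact sum_congr rfl fun b _ => sum_comm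
    _ = m * ∑ a, p a * g a ^ 2 := by simp [sum_iid_mul_mul hp hg]

/-- Achievability half of Stein's lemma, by Chebyshev's inequality for the log-likelihood ratio. -/
theorem eventually_exists_iid_test {p q : α → ℝ} (hp : IsPMF p) (hq : ∀ a, 0 ≤ q a)
    (habs : ∀ a, q a = 0 → p a = 0) {ε δ : ℝ} (hε : 0 < ε) (hδ : 0 < δ) :
    ∀ᶠ m : ℕ in atTop, ∃ A : Set (Fin m → α),
      probIn (iid p m) Aᶜ ≤ ε ∧ probIn (iid q m) A ≤ 2 ^ (-((m : ℝ) * (klDiv p q - δ))) := by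
  set D := klDiv p q
  set g : α → ℝ := fun a => logb 2 (p a / q a) - D
  have hg : ∑ a, p a * g a = 0 := by
    simp [g, mul_sub, sum_sub_distrib, ← sum_mul, hp.2, D, klDiv]
  have hvar : Tendsto (fun m : ℕ => (∑ a, p a * g a ^ 2) / δ ^ 2 / m) atTop (𝓝 0) :=
    tendsto_const_div_atTop_nhds_zero_nat _
  filter_upwards [hvar.eventually (ge_mem_nhds hε), eventually_gt_atTop 0] with m hm hm0
  set t := (m : ℝ) * (D - δ)
  refine ⟨{w | 2 ^ t * iid q m w ≤ iid p m w}, ?_, ?_⟩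
  · have hdev : ∀ w ∈ {w | 2 ^ t * iid q m w ≤ iid p m w}ᶜ, iid p m w ≠ 0 →
        w ∈ {w | (m : ℝ) * δ ≤ |∑ b, g (w b)|} := by
      intro w hwA hw
      have hlt := sum_logb_lt_of_iid_lt hp.1 hq habs hw (not_le.mp hwA)
      have hsum : ∑ b, g (w b) = ∑ b, logb 2 (p (w b) / q (w b)) - m * D := by
        simp [g, sum_sub_distrib]
      show (m : ℝ) * δ ≤ |∑ b, g (w b)|
      linarith [neg_abs_le (∑ b, g (w b))]
    calc probIn (iid p m) {w | 2 ^ t * iid q m w ≤ iid p m w}ᶜ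
        ≤ probIn (iid p m) {w | (m : ℝ) * δ ≤ |∑ b, g (w b)|} :=
          probIn_le_of_support (hp.iid m).1 hdev
      _ ≤ (∑ w, iid p m w * (∑ b, g (w b)) ^ 2) / ((m : ℝ) * δ) ^ 2 :=
          probIn_abs_ge_le_sum_mul_sq_div (hp.iid m).1 _ (by positivity)
      _ = (∑ a, p a * g a ^ 2) / δ ^ 2 / m := by
          rw [sum_iid_mul_sum_sq hp hg]
          field_simp
      _ ≤ ε := hm
  · rw [rpow_neg zero_le_two]
    exact probIn_likelihoodRatio_le (hp.iid m) (by positivity)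

end Stein

section Induced

variable {L : ℕ} {U X Y : Fin L → Type} {V Z : Type}

abbrev Outputs (Y : Fin L → Type) (V Z : Type) (k n : ℕ) : Type :=
  ((l : Fin L) → Fin n → Y l) × (Fin k → V) × (Fin k → Z)

abbrev Inputs (U X : Fin L → Type) (k n : ℕ) : Type :=
  ((l : Fin L) → Fin k → U l) × ((l : Fin L) → Fin n → X l)

def jointWeight (R : (((l : Fin L) → U l) × V × Z) → ℝ) (Ch : (l : Fin L) → X l → Y l → ℝ)
    {k n : ℕ} (f : (l : Fin L) → (Fin k → U l) → (Fin n → X l) → ℝ)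
    (ω : Outputs Y V Z k n × Inputs U X k n) : ℝ :=
  (∏ i, R (fun l => ω.2.1 l i, ω.1.2.1 i, ω.1.2.2 i)) *
    ((∏ l, f l (ω.2.1 l) (ω.2.2 l)) * ∏ l, ∏ j, Ch l (ω.2.2 l j) (ω.1.1 l j))

variable {R : (((l : Fin L) → U l) × V × Z) → ℝ} {Ch : (l : Fin L) → X l → Y l → ℝ} {k n : ℕ}
  {f : (l : Fin L) → (Fin k → U l) → (Fin n → X l) → ℝ}

lemma jointWeight_nonneg [∀ l, Fintype (X l)] [∀ l, Fintype (Y l)] (hR : ∀ g, 0 ≤ R g)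
    (hCh : ∀ l, IsKernel (Ch l)) (hf : ∀ l, IsKernel (f l))
    (ω : Outputs Y V Z k n × Inputs U X k n) :
    0 ≤ jointWeight R Ch f ω :=
  mul_nonneg (prod_nonneg fun _ _ => hR _) <| mul_nonneg (prod_nonneg fun l _ => (hf l _).1 _)
    (prod_nonneg fun l _ => prod_nonneg fun _ _ => (hCh l _).1 _)

def sourceEquiv (k : ℕ) :
    ((Fin k → V) × (Fin k → Z)) × ((l : Fin L) → Fin k → U l) ≃
      (Fin k → ((l : Fin L) → U l) × V × Z) where
  toFun w i := (fun l => w.2 l i, w.1.1 i, w.1.2 i)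
  invFun g := ((fun i => (g i).2.1, fun i => (g i).2.2), fun l i => (g i).1 l)
  left_inv _ := rfl
  right_inv _ := rfl

lemma inducedDist_eq_sum_jointWeight [∀ l, Fintype (U l)] [∀ l, Fintype (X l)]
    (w : Outputs Y V Z k n) :
    inducedDist R Ch k n f w = ∑ ux, jointWeight R Ch f (w, ux) := by
  rw [Fintype.sum_prod_type]
  rfl

lemma inducedDist_nonneg [∀ l, Fintype (U l)] [∀ l, Fintype (X l)] [∀ l, Fintype (Y l)]
    (hR : ∀ g, 0 ≤ R g) (hCh : ∀ l, IsKernel (Ch l))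
    (hf : ∀ l, IsKernel (f l)) (w : Outputs Y V Z k n) : 0 ≤ inducedDist R Ch k n f w := by
  rw [inducedDist_eq_sum_jointWeight]
  exact sum_nonneg fun _ _ => jointWeight_nonneg hR hCh hf _

lemma sum_prod_channel [∀ l, Fintype (Y l)] (hCh : ∀ l, IsKernel (Ch l))
    (x : (l : Fin L) → Fin n → X l) :
    ∑ y : (l : Fin L) → Fin n → Y l, ∏ l, ∏ j, Ch l (x l j) (y l j) = 1 := by
  classical
  rw [← Fintype.prod_sum fun l (yl : Fin n → Y l) => ∏ j, Ch l (x l j) (yl j)]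
  refine prod_eq_one fun l _ => ?_
  rw [← Fintype.prod_sum fun j b => Ch l (x l j) b]
  exact prod_eq_one fun j _ => (hCh l _).2

lemma sum_prod_kernel [∀ l, Fintype (X l)] (hf : ∀ l, IsKernel (f l))
    (u : (l : Fin L) → Fin k → U l) :
    ∑ x : (l : Fin L) → Fin n → X l, ∏ l, f l (u l) (x l) = 1 := by
  classical
  rw [← Fintype.prod_sum fun l xl => f l (u l) xl]
  exact prod_eq_one fun l _ => (hf l _).2

lemma sum_sum_prod_source [∀ l, Fintype (U l)] [Fintype V] [Fintype Z] (hR : IsPMF R) :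
    ∑ vz : (Fin k → V) × (Fin k → Z), ∑ u : (l : Fin L) → Fin k → U l,
      ∏ i, R (fun l => u l i, vz.1 i, vz.2 i) = 1 := by
  classical
  rw [← Fintype.sum_prod_type', Fintype.sum_equiv (sourceEquiv k)
    (fun w => ∏ i, R (fun l => w.2 l i, w.1.1 i, w.1.2 i)) (fun g => ∏ i, R (g i)) fun _ => rfl,
    ← Fintype.prod_sum fun _ g => R g]
  simp [hR.2]

lemma isPMF_inducedDist [∀ l, Fintype (U l)] [∀ l, Fintype (X l)] [∀ l, Fintype (Y l)]
    [Fintype V] [Fintype Z] (hR : IsPMF R) (hCh : ∀ l, IsKernel (Ch l))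
    (hf : ∀ l, IsKernel (f l)) :
    IsPMF (inducedDist R Ch k n f) := by
  refine ⟨inducedDist_nonneg hR.1 hCh hf, ?_⟩
  have hy : ∀ vz : (Fin k → V) × (Fin k → Z), ∑ y, inducedDist R Ch k n f (y, vz) =
      ∑ u : (l : Fin L) → Fin k → U l, ∏ i, R (fun l => u l i, vz.1 i, vz.2 i) := by
    intro vz
    simp only [inducedDist]
    rw [sum_comm]
    refine sum_congr rfl fun u _ => ?_
    rw [sum_comm]
    simp only [← mul_sum, sum_prod_channel hCh, mul_one, sum_prod_kernel hf]
  rw [Fintype.sum_prod_type, sum_comm]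
  simp only [hy, sum_sum_prod_source hR]

lemma pow_mul_inducedDist_le [∀ l, Fintype (U l)] [∀ l, Fintype (X l)] [∀ l, Fintype (Y l)]
    {P Q : (((l : Fin L) → U l) × V × Z) → ℝ} {c : ℝ} (hc : 0 ≤ c)
    (hP : ∀ g, 0 ≤ P g) (hPQ : ∀ g, c * P g ≤ Q g) (hCh : ∀ l, IsKernel (Ch l))
    (hf : ∀ l, IsKernel (f l)) (w : Outputs Y V Z k n) :
    c ^ k * inducedDist P Ch k n f w ≤ inducedDist Q Ch k n f w := by
  simp only [inducedDist_eq_sum_jointWeight, mul_sum]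
  refine sum_le_sum fun ux _ => ?_
  rw [jointWeight, jointWeight, ← mul_assoc]
  refine mul_le_mul_of_nonneg_right ?_ (mul_nonneg (prod_nonneg fun l _ => (hf l _).1 _)
    (prod_nonneg fun l _ => prod_nonneg fun _ _ => (hCh l _).1 _))
  calc c ^ k * ∏ i, P (fun l => ux.1 l i, w.2.1 i, w.2.2 i)
      = ∏ i, c * P (fun l => ux.1 l i, w.2.1 i, w.2.2 i) := by
        rw [prod_mul_distrib, prod_const, card_univ, Fintype.card_fin]
    _ ≤ ∏ i, Q (fun l => ux.1 l i, w.2.1 i, w.2.2 i) :=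
        prod_le_prod (fun i _ => mul_nonneg hc (hP _)) fun i _ => hPQ _

lemma inducedDist_eq_zero_of_eq_zero [∀ l, Fintype (U l)] [∀ l, Fintype (X l)]
    [∀ l, Fintype (Y l)] [Fintype V] [Fintype Z] {P Q : (((l : Fin L) → U l) × V × Z) → ℝ}
    (hP : IsPMF P) (hQ : ∀ g, 0 < Q g) (hCh : ∀ l, IsKernel (Ch l)) (hf : ∀ l, IsKernel (f l))
    {w : Outputs Y V Z k n} (hw : inducedDist Q Ch k n f w = 0) :
    inducedDist P Ch k n f w = 0 := by
  obtain ⟨c, hc, hPQ⟩ := exists_pos_mul_le hP.le_one hQ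
  have h := pow_mul_inducedDist_le hc.le hP.1 hPQ hCh hf w
  rw [hw] at h
  exact le_antisymm (nonpos_of_mul_nonpos_right h (pow_pos hc k))
    (inducedDist_nonneg hP.1 hCh hf w)

end Induced

lemma sum_elim_symm_apply {ι α β γ : Type*} (e : ι ≃ α ⊕ β) (F : ι → γ) (i : ι) :
    Sum.elim (fun a => F (e.symm (.inl a))) (fun b => F (e.symm (.inr b))) (e i) = F i :=
  (congrFun (Sum.elim_comp_inl_inr (F ∘ e.symm)) (e i)).trans (congrArg F (e.symm_apply_apply i))

section Block

variable {L : ℕ} {U X Y : Fin L → Type} {V Z : Type}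
variable {k₀ n₀ m r k n : ℕ} (eK : Fin k ≃ (Fin m × Fin k₀) ⊕ Fin r) (eN : Fin m × Fin n₀ ≃ Fin n)

def blockEnc (f₀ : (l : Fin L) → (Fin k₀ → U l) → (Fin n₀ → X l) → ℝ) :
    (l : Fin L) → (Fin k → U l) → (Fin n → X l) → ℝ :=
  fun l u x => ∏ b, f₀ l (fun i => u (eK.symm (.inl (b, i)))) (fun j => x (eN (b, j)))

def blockMap (w : Outputs Y V Z k n) : Fin m → Outputs Y V Z k₀ n₀ :=
  fun b => (fun l j => w.1 l (eN (b, j)), fun i => w.2.1 (eK.symm (.inl (b, i))),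
    fun i => w.2.2 (eK.symm (.inl (b, i))))

lemma isKernel_blockEnc [∀ l, Fintype (X l)]
    {f₀ : (l : Fin L) → (Fin k₀ → U l) → (Fin n₀ → X l) → ℝ}
    (hf₀ : ∀ l, IsKernel (f₀ l)) (l : Fin L) : IsKernel (blockEnc eK eN f₀ l) := by
  classical
  intro u
  refine ⟨fun x => prod_nonneg fun b _ => (hf₀ l _).1 _, ?_⟩
  rw [← Equiv.sum_comp ((Equiv.curry _ _ _).symm.trans (eN.arrowCongr (Equiv.refl (X l))))]
  simp only [blockEnc, Equiv.trans_apply, Equiv.arrowCongr_apply, Equiv.coe_refl,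
    Function.comp_apply, id, Equiv.symm_apply_apply, Equiv.curry_symm_apply,
    Function.uncurry_apply_pair]
  rw [← Fintype.prod_sum fun b x₀ => f₀ l (fun i => u (eK.symm (.inl (b, i)))) x₀]
  exact prod_eq_one fun b _ => (hf₀ l _).2

def blockEquiv :
    (Fin m → Outputs Y V Z k₀ n₀ × Inputs U X k₀ n₀) × (Fin r → ((l : Fin L) → U l) × V × Z) ≃
      Outputs Y V Z k n × Inputs U X k n where
  toFun p :=
    ((fun l j => (p.1 (eN.symm j).1).1.1 l (eN.symm j).2,
      fun i => Sum.elim (fun bi => (p.1 bi.1).1.2.1 bi.2) (fun s => (p.2 s).2.1) (eK i),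
      fun i => Sum.elim (fun bi => (p.1 bi.1).1.2.2 bi.2) (fun s => (p.2 s).2.2) (eK i)),
     (fun l i => Sum.elim (fun bi => (p.1 bi.1).2.1 l bi.2) (fun s => (p.2 s).1 l) (eK i),
      fun l j => (p.1 (eN.symm j).1).2.2 l (eN.symm j).2))
  invFun ω :=
    (fun b => (blockMap eK eN ω.1 b,
       (fun l i => ω.2.1 l (eK.symm (.inl (b, i))), fun l j => ω.2.2 l (eN (b, j)))),
     fun s => (fun l => ω.2.1 l (eK.symm (.inr s)), ω.1.2.1 (eK.symm (.inr s)),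
       ω.1.2.2 (eK.symm (.inr s))))
  left_inv p := by
    ext <;> simp [blockMap]
  right_inv ω := by
    ext <;> simp [blockMap, sum_elim_symm_apply eK]

lemma blockMap_blockEquiv (β : Fin m → Outputs Y V Z k₀ n₀ × Inputs U X k₀ n₀)
    (ρ : Fin r → ((l : Fin L) → U l) × V × Z) :
    blockMap eK eN (blockEquiv eK eN (β, ρ)).1 = fun b => (β b).1 := by
  ext <;> simp [blockMap, blockEquiv]

variable (R : (((l : Fin L) → U l) × V × Z) → ℝ) (Ch : (l : Fin L) → X l → Y l → ℝ)
  (f₀ : (l : Fin L) → (Fin k₀ → U l) → (Fin n₀ → X l) → ℝ)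

lemma jointWeight_blockEquiv (β : Fin m → Outputs Y V Z k₀ n₀ × Inputs U X k₀ n₀)
    (ρ : Fin r → ((l : Fin L) → U l) × V × Z) :
    jointWeight R Ch (blockEnc eK eN f₀) (blockEquiv eK eN (β, ρ)) =
      iid (jointWeight R Ch f₀) m β * iid R r ρ := by
  have hsrc : ∏ i, R (fun l => (blockEquiv eK eN (β, ρ)).2.1 l i,
        (blockEquiv eK eN (β, ρ)).1.2.1 i, (blockEquiv eK eN (β, ρ)).1.2.2 i) =
      (∏ b, ∏ i, R (fun l => (β b).2.1 l i, (β b).1.2.1 i, (β b).1.2.2 i)) * iid R r ρ := by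
    rw [← eK.symm.prod_comp, Fintype.prod_sum_type, Fintype.prod_prod_type]
    simp [blockEquiv, iid]
  have henc : ∏ l, blockEnc eK eN f₀ l ((blockEquiv eK eN (β, ρ)).2.1 l)
      ((blockEquiv eK eN (β, ρ)).2.2 l) = ∏ b, ∏ l, f₀ l ((β b).2.1 l) ((β b).2.2 l) := by
    rw [Finset.prod_comm]
    simp [blockEnc, blockEquiv]
  have hch : ∏ l, ∏ j,
      Ch l ((blockEquiv eK eN (β, ρ)).2.2 l j) ((blockEquiv eK eN (β, ρ)).1.1 l j) =
      ∏ b, ∏ l, ∏ j, Ch l ((β b).2.2 l j) ((β b).1.1 l j) := by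
    simp only [← eN.prod_comp, Fintype.prod_prod_type]
    simpa [blockEquiv] using Finset.prod_comm
  rw [jointWeight, hsrc, henc, hch]
  simp only [iid, jointWeight, prod_mul_distrib]
  ring

lemma pushf_blockMap [∀ l, Fintype (U l)] [∀ l, Fintype (X l)] [∀ l, Fintype (Y l)]
    [Fintype V] [Fintype Z] (hR : IsPMF R) :
    pushf (inducedDist R Ch k n (blockEnc eK eN f₀)) (blockMap eK eN) =
      iid (inducedDist R Ch k₀ n₀ f₀) m := by
  funext a
  calc pushf (inducedDist R Ch k n (blockEnc eK eN f₀)) (blockMap eK eN) a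
      = ∑ ω, ind (blockMap eK eN ω.1 = a) * jointWeight R Ch (blockEnc eK eN f₀) ω := by
        simp only [pushf, inducedDist_eq_sum_jointWeight, mul_sum, Fintype.sum_prod_type]
    _ = ∑ β, ∑ ρ, ind ((fun b => (β b).1) = a) * (iid (jointWeight R Ch f₀) m β * iid R r ρ) := by
        rw [← (blockEquiv eK eN).sum_comp, Fintype.sum_prod_type]
        simp only [blockMap_blockEquiv, jointWeight_blockEquiv]
    _ = ∑ β, ind ((fun b => (β b).1) = a) * iid (jointWeight R Ch f₀) m β := by
        simp only [← mul_sum, (hR.iid r).2, mul_one]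
    _ = iid (inducedDist R Ch k₀ n₀ f₀) m a := by
        rw [sum_ind_fst_eq_mul_iid]
        simp only [iid, inducedDist_eq_sum_jointWeight]

end Block

lemma isKernel_const_one {α β : Type*} [Fintype β] [Unique β] :
    IsKernel (fun (_ : α) (_ : β) => (1 : ℝ)) :=
  fun _ => ⟨fun _ => zero_le_one, by simp⟩

lemma tendsto_natCast_div_div_atTop (d : ℕ) :
    Tendsto (fun k : ℕ => ((k / d : ℕ) : ℝ) / k) atTop (𝓝 (1 / d)) := by
  refine ((tendsto_nat_floor_mul_div_atTop (a := (1 / d : ℝ)) (by positivity)).comp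
    tendsto_natCast_atTop_atTop).congr fun k => ?_
  rw [Function.comp_apply, one_div_mul_eq_div, Nat.floor_div_eq_div]

section Beta

variable {L : ℕ} {U X Y : Fin L → Type} {V Z : Type}
variable [∀ l, Fintype (U l)] [∀ l, Fintype (X l)] [∀ l, Fintype (Y l)] [Fintype V] [Fintype Z]
variable {P Q : (((l : Fin L) → U l) × V × Z) → ℝ} {Ch : (l : Fin L) → X l → Y l → ℝ}
  {τ ε : ℝ} {k : ℕ}

lemma beta_le_probIn (hQ : ∀ g, 0 ≤ Q g) (hCh : ∀ l, IsKernel (Ch l)) {n : ℕ}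
    (hn : (n : ℝ) ≤ τ * k) {f : (l : Fin L) → (Fin k → U l) → (Fin n → X l) → ℝ}
    (hf : ∀ l, IsKernel (f l)) {A : Set (Outputs Y V Z k n)}
    (hA : probIn (inducedDist P Ch k n f) Aᶜ ≤ ε) :
    beta P Q Ch τ ε k ≤ probIn (inducedDist Q Ch k n f) A := by
  refine csInf_le ⟨0, ?_⟩ ⟨n, hn, f, hf, A, hA, rfl⟩
  rintro _ ⟨n, -, f, hf, A, -, rfl⟩
  exact probIn_nonneg (inducedDist_nonneg hQ hCh hf) A

lemma beta_le_one (hQ : IsPMF Q) (hCh : ∀ l, IsKernel (Ch l)) (hτ : 0 ≤ τ) (hε : 0 ≤ ε) :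
    beta P Q Ch τ ε k ≤ 1 := by
  have hf := fun l => isKernel_const_one (α := Fin k → U l) (β := Fin 0 → X l)
  have h := beta_le_probIn (P := P) (ε := ε) hQ.1 hCh (by simp; positivity) hf (A := Set.univ)
    (by simpa [probIn_empty] using hε)
  rwa [probIn_univ, (isPMF_inducedDist hQ hCh hf).2] at h

lemma pow_mul_le_beta (hP : IsPMF P) (hCh : ∀ l, IsKernel (Ch l)) (hτ : 0 ≤ τ) (hε : 0 ≤ ε) {c : ℝ}
    (hc : 0 ≤ c) (hPQ : ∀ g, c * P g ≤ Q g) :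
    c ^ k * (1 - ε) ≤ beta P Q Ch τ ε k := by
  refine le_csInf ⟨_, 0, by simp; positivity, _,
    fun l => isKernel_const_one (α := Fin k → U l) (β := Fin 0 → X l), Set.univ, ?_, rfl⟩ ?_
  · simpa [probIn_empty] using hε
  · rintro _ ⟨n, -, f, hf, A, hA, rfl⟩
    have hcompl := probIn_compl (isPMF_inducedDist hP hCh hf) A
    calc c ^ k * (1 - ε) ≤ c ^ k * probIn (inducedDist P Ch k n f) A := by gcongr; linarith
      _ ≤ probIn (inducedDist Q Ch k n f) A :=
        const_mul_probIn_le fun w _ => pow_mul_inducedDist_le hc hP.1 hPQ hCh hf w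

lemma beta_pos (hP : IsPMF P) (hQ : ∀ g, 0 < Q g) (hCh : ∀ l, IsKernel (Ch l)) (hτ : 0 ≤ τ)
    (hε0 : 0 ≤ ε) (hε1 : ε < 1) : 0 < beta P Q Ch τ ε k := by
  obtain ⟨c, hc, hPQ⟩ := exists_pos_mul_le hP.le_one hQ
  exact (mul_pos (pow_pos hc k) (sub_pos.mpr hε1)).trans_le
    (pow_mul_le_beta hP hCh hτ hε0 hc.le hPQ)

lemma le_logb_beta_div (hP : IsPMF P) (hCh : ∀ l, IsKernel (Ch l)) (hτ : 0 ≤ τ) (hε0 : 0 ≤ ε)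
    (hε1 : ε < 1) {c : ℝ} (hc : 0 < c) (hPQ : ∀ g, c * P g ≤ Q g) (hk : 1 ≤ k) :
    logb 2 c + logb 2 (1 - ε) ≤ logb 2 (beta P Q Ch τ ε k) / k := by
  have h1ε : 0 < 1 - ε := sub_pos.mpr hε1
  have hlog := logb_le_logb_of_le one_lt_two (mul_pos (pow_pos hc k) h1ε)
    (pow_mul_le_beta hP hCh hτ hε0 hc.le hPQ)
  rw [logb_mul (pow_pos hc k).ne' h1ε.ne', logb_pow] at hlog
  have hε : logb 2 (1 - ε) ≤ 0 := logb_nonpos one_lt_two h1ε.le (by linarith)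
  have hk' : (1 : ℝ) ≤ k := Nat.one_le_cast.mpr hk
  rw [le_div_iff₀ (by positivity)]
  nlinarith

lemma isCoboundedUnder_logb_beta (hP : IsPMF P) (hQ : ∀ g, 0 < Q g)
    (hCh : ∀ l, IsKernel (Ch l)) (hτ : 0 ≤ τ) (hε0 : 0 ≤ ε) (hε1 : ε < 1) :
    IsCoboundedUnder (· ≤ ·) atTop fun k : ℕ => logb 2 (beta P Q Ch τ ε k) / k := by
  obtain ⟨c, hc, hPQ⟩ := exists_pos_mul_le hP.le_one hQ
  exact isCoboundedUnder_le_of_eventually_le atTop ((eventually_ge_atTop 1).mono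
    fun k hk => le_logb_beta_div hP hCh hτ hε0 hε1 hc hPQ hk)

lemma limsup_logb_beta_nonpos (hP : IsPMF P) (hQ : IsPMF Q) (hQpos : ∀ g, 0 < Q g)
    (hCh : ∀ l, IsKernel (Ch l)) (hτ : 0 ≤ τ) (hε0 : 0 ≤ ε) (hε1 : ε < 1) :
    limsup (fun k : ℕ => logb 2 (beta P Q Ch τ ε k) / k) atTop ≤ 0 := by
  refine limsup_le_of_le (isCoboundedUnder_logb_beta hP hQpos hCh hτ hε0 hε1)
    (Eventually.of_forall fun k => div_nonpos_of_nonpos_of_nonneg ?_ k.cast_nonneg)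
  exact logb_nonpos one_lt_two (beta_pos hP hQpos hCh hτ hε0 hε1).le (beta_le_one hQ hCh hτ hε0)

lemma beta_le_probIn_iid (hP : IsPMF P) (hQ : IsPMF Q) (hCh : ∀ l, IsKernel (Ch l))
    (hτ : 0 ≤ τ) {k₀ n₀ m : ℕ} (hmk : m * k₀ ≤ k) (hn₀ : (n₀ : ℝ) ≤ τ * k₀)
    {f₀ : (l : Fin L) → (Fin k₀ → U l) → (Fin n₀ → X l) → ℝ} (hf₀ : ∀ l, IsKernel (f₀ l))
    {A : Set (Fin m → Outputs Y V Z k₀ n₀)}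
    (hA : probIn (iid (inducedDist P Ch k₀ n₀ f₀) m) Aᶜ ≤ ε) :
    beta P Q Ch τ ε k ≤ probIn (iid (inducedDist Q Ch k₀ n₀ f₀) m) A := by
  obtain ⟨r, rfl⟩ := Nat.exists_eq_add_of_le hmk
  set eK : Fin (m * k₀ + r) ≃ (Fin m × Fin k₀) ⊕ Fin r :=
    finSumFinEquiv.symm.trans (Equiv.sumCongr finProdFinEquiv.symm (Equiv.refl _))
  have hn : ((m * n₀ : ℕ) : ℝ) ≤ τ * ↑(m * k₀ + r) := by
    push_cast
    nlinarith [mul_le_mul_of_nonneg_left hn₀ (Nat.cast_nonneg (α := ℝ) m),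
      mul_nonneg hτ (Nat.cast_nonneg (α := ℝ) r)]
  have h := beta_le_probIn (ε := ε) hQ.1 hCh hn (isKernel_blockEnc eK finProdFinEquiv hf₀)
    (A := blockMap eK finProdFinEquiv ⁻¹' A)
    (by rwa [← Set.preimage_compl, probIn_preimage, pushf_blockMap eK _ P Ch f₀ hP])
  rwa [probIn_preimage, pushf_blockMap eK _ Q Ch f₀ hQ] at h

lemma limsup_logb_beta_le_neg_klDiv_sub (hP : IsPMF P) (hQ : IsPMF Q) (hQpos : ∀ g, 0 < Q g)
    (hCh : ∀ l, IsKernel (Ch l)) (hτ : 0 ≤ τ) (hε0 : 0 < ε) (hε1 : ε < 1) {k₀ n₀ : ℕ}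
    (hk₀ : 1 ≤ k₀) (hn₀ : (n₀ : ℝ) ≤ τ * k₀)
    {f₀ : (l : Fin L) → (Fin k₀ → U l) → (Fin n₀ → X l) → ℝ} (hf₀ : ∀ l, IsKernel (f₀ l))
    {δ : ℝ} (hδ : 0 < δ) :
    limsup (fun k : ℕ => logb 2 (beta P Q Ch τ ε k) / k) atTop ≤
      -((klDiv (inducedDist P Ch k₀ n₀ f₀) (inducedDist Q Ch k₀ n₀ f₀) - δ) / k₀) := by
  set D := klDiv (inducedDist P Ch k₀ n₀ f₀) (inducedDist Q Ch k₀ n₀ f₀)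
  have hlim : Tendsto (fun k : ℕ => -(((k / k₀ : ℕ) : ℝ) / k * (D - δ))) atTop
      (𝓝 (-(1 / k₀ * (D - δ)))) :=
    ((tendsto_natCast_div_div_atTop k₀).mul_const _).neg
  have hev : ∀ᶠ k : ℕ in atTop,
      logb 2 (beta P Q Ch τ ε k) / k ≤ -(((k / k₀ : ℕ) : ℝ) / k * (D - δ)) := by
    filter_upwards [(Nat.tendsto_div_const_atTop (Nat.one_le_iff_ne_zero.mp hk₀)).eventually
      (eventually_exists_iid_test (isPMF_inducedDist hP hCh hf₀)
        (inducedDist_nonneg hQ.1 hCh hf₀) (fun _ => inducedDist_eq_zero_of_eq_zero hP hQpos hCh hf₀)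
        hε0 hδ)] with k ⟨A, hAp, hAq⟩
    have hβ :=
      (beta_le_probIn_iid hP hQ hCh hτ (Nat.div_mul_le_self k k₀) hn₀ hf₀ hAp).trans hAq
    have hlog := logb_le_logb_of_le one_lt_two (beta_pos hP hQpos hCh hτ hε0.le hε1) hβ
    rw [logb_rpow two_pos (by norm_num)] at hlog
    rw [div_mul_eq_mul_div, ← neg_div]
    exact div_le_div_of_nonneg_right hlog (Nat.cast_nonneg k)
  calc limsup (fun k : ℕ => logb 2 (beta P Q Ch τ ε k) / k) atTop
      ≤ limsup (fun k : ℕ => -(((k / k₀ : ℕ) : ℝ) / k * (D - δ))) atTop :=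
        limsup_le_limsup hev (isCoboundedUnder_logb_beta hP hQpos hCh hτ hε0.le hε1)
          hlim.isBoundedUnder_le
    _ = -((D - δ) / k₀) := by rw [hlim.limsup_eq]; ring

theorem limsup_logb_beta_le_neg_klDiv (hP : IsPMF P) (hQ : IsPMF Q) (hQpos : ∀ g, 0 < Q g)
    (hCh : ∀ l, IsKernel (Ch l)) (hτ : 0 ≤ τ) (hε0 : 0 < ε) (hε1 : ε < 1) {k₀ n₀ : ℕ}
    (hk₀ : 1 ≤ k₀) (hn₀ : (n₀ : ℝ) ≤ τ * k₀)
    {f₀ : (l : Fin L) → (Fin k₀ → U l) → (Fin n₀ → X l) → ℝ} (hf₀ : ∀ l, IsKernel (f₀ l)) :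
    limsup (fun k : ℕ => logb 2 (beta P Q Ch τ ε k) / k) atTop ≤
      -(klDiv (inducedDist P Ch k₀ n₀ f₀) (inducedDist Q Ch k₀ n₀ f₀) / k₀) := by
  have hk₀' : (0 : ℝ) < k₀ := Nat.cast_pos.mpr hk₀
  refine le_of_forall_pos_le_add fun η hη => ?_
  calc limsup (fun k : ℕ => logb 2 (beta P Q Ch τ ε k) / k) atTop
      ≤ -((klDiv (inducedDist P Ch k₀ n₀ f₀) (inducedDist Q Ch k₀ n₀ f₀) - η * k₀) / k₀) :=
        limsup_logb_beta_le_neg_klDiv_sub hP hQ hQpos hCh hτ hε0 hε1 hk₀ hn₀ hf₀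
          (by positivity)
    _ = _ := by field_simp; ring

end Beta

end DHT

open DHT Filter Real

theorem statement_0_general {L : ℕ} {U X Y : Fin L → Type} {V Z : Type}
    [∀ l, Fintype (U l)] [∀ l, Fintype (X l)] [∀ l, Fintype (Y l)]
    [Fintype V] [Fintype Z]
    (P Q : (((l : Fin L) → U l) × V × Z) → ℝ)
    (hP : IsPMF P) (hQ : IsPMF Q) (hQpos : ∀ x, 0 < Q x)
    (Ch : (l : Fin L) → X l → Y l → ℝ) (hCh : ∀ l, IsKernel (Ch l))
    (τ : ℝ) (hτ : 0 < τ) (ε : ℝ) (hε0 : 0 < ε) (hε1 : ε < 1) :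
    Filter.limsup (fun k : ℕ => Real.logb 2 (beta P Q Ch τ ε k) / k) Filter.atTop ≤
      - theta P Q Ch τ := by
  have hlim0 := limsup_logb_beta_nonpos hP hQ hQpos hCh hτ.le hε0.le hε1
  rw [le_neg]
  refine Real.sSup_le ?_ (by linarith)
  rintro _ ⟨k₀, hk₀, rfl⟩
  refine Real.sSup_le ?_ (by linarith)
  rintro _ ⟨n₀, hn₀, f₀, hf₀, rfl⟩
  linarith [limsup_logb_beta_le_neg_klDiv hP hQ hQpos hCh hτ.le hε0 hε1 hk₀ hn₀ hf₀]

/-- For every bandwidth ratio `τ > 0` and every `ε ∈ (0,1)`,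
`limsup_{k→∞} (1/k)·log₂ β(k,τ,ε) ≤ −θ(τ)`. -/
theorem statement_0 {L : ℕ} {U X Y : Fin L → Type} {V Z : Type}
    [∀ l, Fintype (U l)] [∀ l, Fintype (X l)] [∀ l, Fintype (Y l)]
    [Fintype V] [Fintype Z]
    (P Q : (((l : Fin L) → U l) × V × Z) → ℝ)
    (hP : IsPMF P) (hQ : IsPMF Q) (hmarg : SameMarginals P Q) (hQpos : ∀ x, 0 < Q x)
    (Ch : (l : Fin L) → X l → Y l → ℝ) (hCh : ∀ l, IsKernel (Ch l))
    (τ : ℝ) (hτ : 0 < τ) (ε : ℝ) (hε0 : 0 < ε) (hε1 : ε < 1) :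
    Filter.limsup (fun k : ℕ => Real.logb 2 (beta P Q Ch τ ε k) / k) Filter.atTop ≤
      - theta P Q Ch τ :=
  statement_0_general P Q hP hQ hQpos Ch hCh τ hτ ε hε0 hε1
end
end

section
/- Let (U,V,Z) be random variables on finite sets with joint pmf P_{UVZ} and let c ≥ 0. Then the infimum, over all finite random variables W with (Z,V)−U−W a Markov chain and I(U;W|V,Z) ≤ c, of max{ H(V|W,Z), H(V|W,Z) + I(U;W|Z) − c }, equals the infimum, over all finite W with (Z,V)−U−W a Markov chain and I(U;W|Z) ≤ c, of H(V|W,Z). -/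
/-!
The chain rule for the Markov chain `(Z,V) − U − W` gives
`I(U;W|Z) = I(V;W|Z) + I(U;W|V,Z)`. Hence every `W` admissible on the right is admissible on
the left, where the maximum equals `H(V|W,Z)`. Conversely, if a `W` admissible on the left has
`I(U;W|Z) > c`, time sharing (reveal `W` with probability `p = c / I(U;W|Z)`, a constant
otherwise) keeps the Markov chain, brings `I(U;W|Z)` down to `c`, and gives
`H(V|W',Z) = H(V|W,Z) + (1 - p) I(V;W|Z) ≤ H(V|W,Z) + I(U;W|Z) - c`.
Since each set of values dominates the other elementwise, the two infima agree.
-/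

open Filter Real

noncomputable section

open DHT Filter Real

namespace DHT

open Finset

section Entropy

variable {α β γ : Type*} [Fintype α] [Fintype β] [Fintype γ]

lemma sub_le_mul_log_div {p q : ℝ} (hp : 0 ≤ p) (hq : 0 ≤ q) (hpq : q = 0 → p = 0) :
    p - q ≤ p * Real.log (p / q) := by
  rcases hp.eq_or_lt with rfl | hp
  · simpa using hq
  have hq : 0 < q := hq.lt_of_ne' fun h => hp.ne' (hpq h)
  have h := Real.one_sub_inv_le_log_of_pos (div_pos hp hq)
  rw [inv_div] at h
  calc p - q = p * (1 - q / p) := by field_simp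
    _ ≤ p * Real.log (p / q) := mul_le_mul_of_nonneg_left h hp.le

lemma mul_mul_logb_mul_div_mul (c x a b : ℝ) :
    c * x * Real.logb 2 (c * a / (c * b)) = c * (x * Real.logb 2 (a / b)) := by
  rcases eq_or_ne c 0 with rfl | hc
  · simp
  · rw [mul_div_mul_left _ _ hc, mul_assoc]

lemma sum_mul_logb_div_nonneg {p q : α → ℝ} (hp : ∀ a, 0 ≤ p a) (hq : ∀ a, 0 ≤ q a)
    (hpq : ∀ a, q a = 0 → p a = 0) (hsum : ∑ a, q a ≤ ∑ a, p a) :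
    0 ≤ ∑ a, p a * Real.logb 2 (p a / q a) := by
  have h : 0 ≤ ∑ a, p a * Real.log (p a / q a) :=
    calc 0 ≤ ∑ a, (p a - q a) := by rw [sum_sub_distrib]; linarith
      _ ≤ _ := sum_le_sum fun a _ => sub_le_mul_log_div (hp a) (hq a) (hpq a)
  simp only [Real.logb, ← mul_div_assoc, ← sum_div]
  positivity

lemma condMI_nonneg {p : α × β × γ → ℝ} (hp : ∀ x, 0 ≤ p x) : 0 ≤ condMI p := by
  let A : α → γ → ℝ := fun a c => ∑ b, p (a, b, c)
  let B : β → γ → ℝ := fun b c => ∑ a, p (a, b, c)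
  let S : γ → ℝ := fun c => ∑ a, ∑ b, p (a, b, c)
  let q : α × β × γ → ℝ := fun x => A x.1 x.2.2 * B x.2.1 x.2.2 / S x.2.2
  have hA : ∀ x : α × β × γ, p x ≤ A x.1 x.2.2 := fun x =>
    single_le_sum (fun b _ => hp (x.1, b, x.2.2)) (mem_univ x.2.1)
  have hB : ∀ x : α × β × γ, p x ≤ B x.2.1 x.2.2 := fun x =>
    single_le_sum (fun a _ => hp (a, x.2.1, x.2.2)) (mem_univ x.1)
  have hS : ∀ x : α × β × γ, p x ≤ S x.2.2 := fun x => (hA x).trans <|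
    single_le_sum (f := fun a => A a x.2.2) (fun a _ => sum_nonneg fun b _ => hp _) (mem_univ x.1)
  have hq : ∀ x, 0 ≤ q x := fun x =>
    div_nonneg (mul_nonneg ((hp x).trans (hA x)) ((hp x).trans (hB x))) ((hp x).trans (hS x))
  have hpq : ∀ x, q x = 0 → p x = 0 := by
    intro x hx
    by_contra hne
    have hpos := (hp x).lt_of_ne' hne
    exact (div_pos (mul_pos (hpos.trans_le (hA x)) (hpos.trans_le (hB x)))
      (hpos.trans_le (hS x))).ne' hx
  have hsum : ∑ x, q x = ∑ x, p x := by
    have hAS : ∀ c, ∑ a, A a c = S c := fun c => rfl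
    have hBS : ∀ c, ∑ b, B b c = S c := fun c => sum_comm
    simp only [q, Fintype.sum_prod_type_right]
    refine sum_congr rfl fun c _ => ?_
    simp only [← sum_div, ← sum_mul, ← mul_sum, hAS, hBS, mul_self_div_self]
    exact sum_comm
  -- `q` has the same total mass as `p`, and `condMI p` is the divergence of `p` from `q`.
  have hrw : condMI p = ∑ x, p x * Real.logb 2 (p x / q x) := by
    refine sum_congr rfl fun x _ => ?_
    rw [div_div_eq_mul_div]
  rw [hrw]
  exact sum_mul_logb_div_nonneg hp hq hpq hsum.le

end Entropy

section Marginals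

variable {Uu V Z Wt : Type} [Fintype Uu] [Fintype V] [Fintype Z] [Fintype Wt]
  (J : (Uu × V × Z) × Wt → ℝ)

def margUVZ (u : Uu) (v : V) (z : Z) : ℝ := ∑ w, J ((u, v, z), w)
def margUWZ (u : Uu) (w : Wt) (z : Z) : ℝ := ∑ v, J ((u, v, z), w)
def margVWZ (v : V) (w : Wt) (z : Z) : ℝ := ∑ u, J ((u, v, z), w)
def margUZ (u : Uu) (z : Z) : ℝ := ∑ v, margUVZ J u v z
def margVZ (v : V) (z : Z) : ℝ := ∑ u, margUVZ J u v z
def margWZ (w : Wt) (z : Z) : ℝ := ∑ u, margUWZ J u w z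
def margZ (z : Z) : ℝ := ∑ u, margUZ J u z
def margU (u : Uu) : ℝ := ∑ z, margUZ J u z
def margUW (u : Uu) (w : Wt) : ℝ := ∑ z, margUWZ J u w z

omit [Fintype Z] [Fintype Wt] in
lemma sum_margVWZ_eq_margWZ (w : Wt) (z : Z) : ∑ v, margVWZ J v w z = margWZ J w z :=
  sum_comm

omit [Fintype V] [Fintype Z] in
lemma sum_margVWZ_eq_margVZ (v : V) (z : Z) : ∑ w, margVWZ J v w z = margVZ J v z :=
  sum_comm

omit [Fintype Uu] [Fintype Z] in
lemma sum_margUWZ_eq_margUZ (u : Uu) (z : Z) : ∑ w, margUWZ J u w z = margUZ J u z :=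
  sum_comm

omit [Fintype Z] in
lemma sum_margVZ_eq_margZ (z : Z) : ∑ v, margVZ J v z = margZ J z :=
  sum_comm

lemma sum_margUWZ_mul (f : Uu → Wt → Z → ℝ) :
    ∑ u, ∑ w, ∑ z, margUWZ J u w z * f u w z =
      ∑ u, ∑ v, ∑ z, ∑ w, J ((u, v, z), w) * f u w z := by
  simp only [margUWZ, sum_mul]
  refine sum_congr rfl fun u _ => ?_
  rw [sum_comm_cycle]
  exact sum_congr rfl fun v _ => sum_comm

lemma sum_margVWZ_mul (f : V → Wt → Z → ℝ) :
    ∑ v, ∑ w, ∑ z, margVWZ J v w z * f v w z =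
      ∑ u, ∑ v, ∑ z, ∑ w, J ((u, v, z), w) * f v w z := by
  simp only [margVWZ, sum_mul]
  refine (sum_congr rfl fun v _ => ?_).trans sum_comm
  rw [sum_comm_cycle]
  exact sum_congr rfl fun u _ => sum_comm

lemma sum_margVZ_mul (f : V → Z → ℝ) :
    ∑ v, ∑ z, margVZ J v z * f v z = ∑ u, ∑ v, ∑ z, ∑ w, J ((u, v, z), w) * f v z := by
  simp only [margVZ, margUVZ, sum_mul]
  exact (sum_congr rfl fun v _ => sum_comm).trans sum_comm

lemma miUW_Z_eq_sum : miUW_Z J = ∑ u, ∑ v, ∑ z, ∑ w, J ((u, v, z), w) *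
    Real.logb 2 (margUWZ J u w z * margZ J z / (margUZ J u z * margWZ J w z)) := by
  simp only [miUW_Z, condMI, Fintype.sum_prod_type, ← margUWZ.eq_1, ← margWZ.eq_1,
    sum_margUWZ_eq_margUZ, ← margZ.eq_1]
  exact sum_margUWZ_mul J _

lemma miVW_Z_eq_sum : miVW_Z J = ∑ u, ∑ v, ∑ z, ∑ w, J ((u, v, z), w) *
    Real.logb 2 (margVWZ J v w z * margZ J z / (margVZ J v z * margWZ J w z)) := by
  simp only [miVW_Z, condMI, Fintype.sum_prod_type, ← margVWZ.eq_1, sum_margVWZ_eq_margWZ,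
    sum_margVWZ_eq_margVZ, sum_margVZ_eq_margZ]
  exact sum_margVWZ_mul J _

lemma miUW_VZ_eq_sum : miUW_VZ J = ∑ u, ∑ v, ∑ z, ∑ w, J ((u, v, z), w) *
    Real.logb 2 (J ((u, v, z), w) * margVZ J v z / (margUVZ J u v z * margVWZ J v w z)) := by
  simp only [miUW_VZ, condMI, Fintype.sum_prod_type, ← margVWZ.eq_1, ← margUVZ.eq_1,
    ← margVZ.eq_1]
  exact sum_congr rfl fun u _ => sum_comm_cycle.symm

lemma entV_WZ_eq_sum : entV_WZ J = -∑ u, ∑ v, ∑ z, ∑ w, J ((u, v, z), w) *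
    Real.logb 2 (margVWZ J v w z / margWZ J w z) := by
  simp only [entV_WZ, condEntropy, Fintype.sum_prod_type, ← margVWZ.eq_1, sum_margVWZ_eq_margWZ]
  rw [sum_margVWZ_mul J]

lemma entV_Z_eq_sum : entV_Z (fun x => ∑ w, J (x, w)) =
    -∑ u, ∑ v, ∑ z, ∑ w, J ((u, v, z), w) * Real.logb 2 (margVZ J v z / margZ J z) := by
  simp only [entV_Z, condEntropy, Fintype.sum_prod_type, ← margUVZ.eq_1, ← margVZ.eq_1,
    sum_margVZ_eq_margZ]
  rw [sum_margVZ_mul J]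

end Marginals

section ChainRules

variable {Uu V Z Wt : Type} [Fintype Uu] [Fintype V] [Fintype Z] [Fintype Wt]
  {J : (Uu × V × Z) × Wt → ℝ}

lemma margs_pos_of_pos (hJ : ∀ x, 0 ≤ J x) {u : Uu} {v : V} {z : Z} {w : Wt}
    (hx : 0 < J ((u, v, z), w)) :
    0 < margUVZ J u v z ∧ 0 < margUWZ J u w z ∧ 0 < margVWZ J v w z ∧ 0 < margUZ J u z ∧
      0 < margVZ J v z ∧ 0 < margWZ J w z ∧ 0 < margZ J z ∧ 0 < margU J u := by
  have hUVZ : ∀ u v z, 0 ≤ margUVZ J u v z := fun _ _ _ => sum_nonneg fun _ _ => hJ _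
  have hUWZ : ∀ u w z, 0 ≤ margUWZ J u w z := fun _ _ _ => sum_nonneg fun _ _ => hJ _
  have hUZ : ∀ u z, 0 ≤ margUZ J u z := fun _ _ => sum_nonneg fun _ _ => hUVZ _ _ _
  have pUVZ : 0 < margUVZ J u v z := hx.trans_le (single_le_sum (fun _ _ => hJ _) (mem_univ w))
  have pUZ : 0 < margUZ J u z := pUVZ.trans_le <|
    single_le_sum (f := fun v => margUVZ J u v z) (fun _ _ => hUVZ _ _ _) (mem_univ v)
  have pUWZ : 0 < margUWZ J u w z := hx.trans_le <|
    single_le_sum (f := fun v => J ((u, v, z), w)) (fun _ _ => hJ _) (mem_univ v)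
  refine ⟨pUVZ, pUWZ, hx.trans_le ?_, pUZ, pUVZ.trans_le ?_, pUWZ.trans_le ?_,
    pUZ.trans_le ?_, pUZ.trans_le ?_⟩
  · exact single_le_sum (f := fun u => J ((u, v, z), w)) (fun _ _ => hJ _) (mem_univ u)
  · exact single_le_sum (f := fun u => margUVZ J u v z) (fun _ _ => hUVZ _ _ _) (mem_univ u)
  · exact single_le_sum (f := fun u => margUWZ J u w z) (fun _ _ => hUWZ _ _ _) (mem_univ u)
  · exact single_le_sum (f := fun u => margUZ J u z) (fun _ _ => hUZ _ _) (mem_univ u)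
  · exact single_le_sum (f := fun z => margUZ J u z) (fun _ _ => hUZ _ _) (mem_univ z)

omit [Fintype Uu] in
lemma markovZVUW_iff : MarkovZVUW J ↔
    ∀ u v z w, J ((u, v, z), w) * margU J u = margUVZ J u v z * margUW J u w := by
  simp only [MarkovZVUW, MarkovChain, Prod.forall, Fintype.sum_prod_type]
  exact ⟨fun h u v z w => h z v u w, fun h z v u w => h u v z w⟩

lemma margUWZ_mul_margUVZ (hJ : ∀ x, 0 ≤ J x) (hM : MarkovZVUW J) {u : Uu} {v : V} {z : Z}
    {w : Wt} (hx : 0 < J ((u, v, z), w)) :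
    margUWZ J u w z * margUVZ J u v z = J ((u, v, z), w) * margUZ J u z := by
  have hM := markovZVUW_iff.1 hM
  have hsum : margUWZ J u w z * margU J u = margUZ J u z * margUW J u w := by
    simp only [margUWZ, margUZ, sum_mul]
    exact sum_congr rfl fun v _ => hM u v z w
  obtain ⟨-, -, -, -, -, -, -, hU⟩ := margs_pos_of_pos hJ hx
  refine mul_right_cancel₀ hU.ne' ?_
  linear_combination margUVZ J u v z * hsum - margUZ J u z * hM u v z w

lemma miUW_Z_eq_miVW_Z_add_miUW_VZ (hJ : ∀ x, 0 ≤ J x) (hM : MarkovZVUW J) :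
    miUW_Z J = miVW_Z J + miUW_VZ J := by
  rw [miUW_Z_eq_sum, miVW_Z_eq_sum, miUW_VZ_eq_sum]
  simp only [← sum_add_distrib]
  refine sum_congr rfl fun u _ => sum_congr rfl fun v _ => sum_congr rfl fun z _ =>
    sum_congr rfl fun w _ => ?_
  rcases (hJ ((u, v, z), w)).eq_or_lt with h0 | hx
  · simp [← h0]
  obtain ⟨hUVZ, hUWZ, hVWZ, hUZ, hVZ, hWZ, hZ, -⟩ := margs_pos_of_pos hJ hx
  have hkey := margUWZ_mul_margUVZ hJ hM hx
  rw [← mul_add, ← Real.logb_mul (by positivity) (by positivity)]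
  congr 2
  field_simp
  linear_combination hkey

lemma entV_Z_eq_entV_WZ_add_miVW_Z (hJ : ∀ x, 0 ≤ J x) :
    entV_Z (fun x => ∑ w, J (x, w)) = entV_WZ J + miVW_Z J := by
  rw [entV_Z_eq_sum, entV_WZ_eq_sum, miVW_Z_eq_sum, neg_add_eq_sub, eq_sub_iff_add_eq,
    neg_add_eq_iff_eq_add]
  simp only [← sum_add_distrib]
  refine sum_congr rfl fun u _ => sum_congr rfl fun v _ => sum_congr rfl fun z _ =>
    sum_congr rfl fun w _ => ?_
  rcases (hJ ((u, v, z), w)).eq_or_lt with h0 | hx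
  · simp [← h0]
  obtain ⟨-, -, hVWZ, -, hVZ, hWZ, hZ, -⟩ := margs_pos_of_pos hJ hx
  rw [← mul_add, ← Real.logb_mul (by positivity) (by positivity)]
  congr 2
  field_simp

lemma miVW_Z_nonneg (hJ : ∀ x, 0 ≤ J x) : 0 ≤ miVW_Z J :=
  condMI_nonneg fun _ => sum_nonneg fun _ _ => hJ _

lemma miUW_VZ_nonneg (hJ : ∀ x, 0 ≤ J x) : 0 ≤ miUW_VZ J :=
  condMI_nonneg fun _ => hJ _

lemma miVW_Z_le_miUW_Z (hJ : ∀ x, 0 ≤ J x) (hM : MarkovZVUW J) : miVW_Z J ≤ miUW_Z J := by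
  rw [miUW_Z_eq_miVW_Z_add_miUW_VZ hJ hM]
  linarith [miUW_VZ_nonneg hJ]

lemma miUW_VZ_le_miUW_Z (hJ : ∀ x, 0 ≤ J x) (hM : MarkovZVUW J) : miUW_VZ J ≤ miUW_Z J := by
  rw [miUW_Z_eq_miVW_Z_add_miUW_VZ hJ hM]
  linarith [miVW_Z_nonneg hJ]

end ChainRules

section TimeSharing

variable {Uu V Z : Type} {n : ℕ} (J : (Uu × V × Z) × Fin n → ℝ) (p : ℝ)

/-- With probability `p` the new auxiliary variable is `W`, otherwise the fresh constant
`Fin.last n`. -/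
def timeShare : (Uu × V × Z) × Fin (n + 1) → ℝ :=
  fun y => Fin.lastCases ((1 - p) * ∑ w, J (y.1, w)) (fun w => p * J (y.1, w)) y.2

@[simp]
lemma timeShare_castSucc (x : Uu × V × Z) (w : Fin n) :
    timeShare J p (x, w.castSucc) = p * J (x, w) := by
  simp [timeShare]

@[simp]
lemma timeShare_last (x : Uu × V × Z) :
    timeShare J p (x, Fin.last n) = (1 - p) * ∑ w, J (x, w) := by
  simp [timeShare]

lemma sum_timeShare (x : Uu × V × Z) : ∑ w, timeShare J p (x, w) = ∑ w, J (x, w) := by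
  simp only [Fin.sum_univ_castSucc, timeShare_castSucc, timeShare_last, ← mul_sum]
  ring

@[simp]
lemma margUVZ_timeShare (u : Uu) (v : V) (z : Z) :
    margUVZ (timeShare J p) u v z = margUVZ J u v z :=
  sum_timeShare J p _

@[simp]
lemma margUZ_timeShare [Fintype V] (u : Uu) (z : Z) :
    margUZ (timeShare J p) u z = margUZ J u z := by
  simp [margUZ]

@[simp]
lemma margZ_timeShare [Fintype Uu] [Fintype V] (z : Z) :
    margZ (timeShare J p) z = margZ J z := by
  simp [margZ]

@[simp]
lemma margU_timeShare [Fintype V] [Fintype Z] (u : Uu) :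
    margU (timeShare J p) u = margU J u := by
  simp [margU]

@[simp]
lemma margUWZ_timeShare_castSucc [Fintype V] (u : Uu) (w : Fin n) (z : Z) :
    margUWZ (timeShare J p) u w.castSucc z = p * margUWZ J u w z := by
  simp [margUWZ, mul_sum]

@[simp]
lemma margVWZ_timeShare_castSucc [Fintype Uu] (v : V) (w : Fin n) (z : Z) :
    margVWZ (timeShare J p) v w.castSucc z = p * margVWZ J v w z := by
  simp [margVWZ, mul_sum]

@[simp]
lemma margWZ_timeShare_castSucc [Fintype Uu] [Fintype V] (w : Fin n) (z : Z) :
    margWZ (timeShare J p) w.castSucc z = p * margWZ J w z := by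
  simp [margWZ, mul_sum]

@[simp]
lemma margUW_timeShare_castSucc [Fintype V] [Fintype Z] (u : Uu) (w : Fin n) :
    margUW (timeShare J p) u w.castSucc = p * margUW J u w := by
  simp [margUW, mul_sum]

@[simp]
lemma margUWZ_timeShare_last [Fintype V] (u : Uu) (z : Z) :
    margUWZ (timeShare J p) u (Fin.last n) z = (1 - p) * margUZ J u z := by
  simp [margUWZ, margUZ, margUVZ, mul_sum]

@[simp]
lemma margVWZ_timeShare_last [Fintype Uu] (v : V) (z : Z) :
    margVWZ (timeShare J p) v (Fin.last n) z = (1 - p) * margVZ J v z := by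
  simp [margVWZ, margVZ, margUVZ, mul_sum]

@[simp]
lemma margWZ_timeShare_last [Fintype Uu] [Fintype V] (z : Z) :
    margWZ (timeShare J p) (Fin.last n) z = (1 - p) * margZ J z := by
  simp [margWZ, margZ, ← mul_sum]

@[simp]
lemma margUW_timeShare_last [Fintype V] [Fintype Z] (u : Uu) :
    margUW (timeShare J p) u (Fin.last n) = (1 - p) * margU J u := by
  simp [margUW, margU, mul_sum]

variable {J p}

lemma markovZVUW_timeShare [Fintype V] [Fintype Z] (hM : MarkovZVUW J) :
    MarkovZVUW (timeShare J p) := by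
  rw [markovZVUW_iff] at hM ⊢
  intro u v z w
  induction w using Fin.lastCases with
  | last =>
    simp only [timeShare_last, margU_timeShare, margUVZ_timeShare, margUW_timeShare_last,
      ← margUVZ.eq_1]
    ring
  | cast w =>
    simp only [timeShare_castSucc, margU_timeShare, margUVZ_timeShare, margUW_timeShare_castSucc]
    linear_combination p * hM u v z w

variable [Fintype Uu] [Fintype V] [Fintype Z]

lemma isPMF_timeShare (hJ : IsPMF J) (hp₀ : 0 ≤ p) (hp₁ : p ≤ 1) :
    IsPMF (timeShare J p) := by
  refine ⟨fun ⟨x, w⟩ => ?_, ?_⟩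
  · induction w using Fin.lastCases with
    | last => simpa using mul_nonneg (sub_nonneg.2 hp₁) (sum_nonneg fun w _ => hJ.1 (x, w))
    | cast w => simpa using mul_nonneg hp₀ (hJ.1 (x, w))
  · rw [Fintype.sum_prod_type]
    simp only [sum_timeShare]
    rw [← Fintype.sum_prod_type, hJ.2]

lemma miUW_Z_timeShare : miUW_Z (timeShare J p) = p * miUW_Z J := by
  rw [miUW_Z_eq_sum, miUW_Z_eq_sum]
  simp only [mul_sum]
  refine sum_congr rfl fun u _ => sum_congr rfl fun v _ => sum_congr rfl fun z _ => ?_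
  simp only [Fin.sum_univ_castSucc, timeShare_castSucc, timeShare_last, margUWZ_timeShare_castSucc,
    margZ_timeShare, margUZ_timeShare, margWZ_timeShare_castSucc, margUWZ_timeShare_last,
    margWZ_timeShare_last]
  rw [show margUZ J u z * ((1 - p) * margZ J z) = (1 - p) * margUZ J u z * margZ J z by ring,
    Real.logb, Real.log_div_self, zero_div, mul_zero, add_zero]
  refine sum_congr rfl fun w _ => ?_
  rw [← mul_mul_logb_mul_div_mul]
  ring_nf

lemma entV_WZ_timeShare :
    entV_WZ (timeShare J p) = p * entV_WZ J + (1 - p) * entV_Z (fun x => ∑ w, J (x, w)) := by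
  rw [entV_WZ_eq_sum, entV_WZ_eq_sum, entV_Z_eq_sum]
  simp only [Fin.sum_univ_castSucc, timeShare_castSucc, timeShare_last, margVWZ_timeShare_castSucc,
    margWZ_timeShare_castSucc, margVWZ_timeShare_last, margWZ_timeShare_last,
    mul_mul_logb_mul_div_mul, sum_add_distrib, ← mul_sum, sum_mul]
  ring

lemma exists_timeShare_of_le_miUW_Z (hJ : IsPMF J) (hM : MarkovZVUW J) {c : ℝ} (hc : 0 ≤ c)
    (hcI : c ≤ miUW_Z J) :
    ∃ J' : (Uu × V × Z) × Fin (n + 1) → ℝ, IsPMF J' ∧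
      (∀ x, ∑ w, J' (x, w) = ∑ w, J (x, w)) ∧ MarkovZVUW J' ∧ miUW_Z J' = c ∧
      entV_WZ J' ≤ entV_WZ J + miUW_Z J - c := by
  have hI : 0 ≤ miUW_Z J := hc.trans hcI
  set p := c / miUW_Z J
  have hpI : p * miUW_Z J = c := by
    rcases hI.eq_or_lt with h | h
    · rw [← h] at hcI ⊢
      simp [le_antisymm hcI hc]
    · exact div_mul_cancel₀ _ h.ne'
  have hp₁ : p ≤ 1 := div_le_one_of_le₀ hcI hI
  refine ⟨timeShare J p, isPMF_timeShare hJ (div_nonneg hc hI) hp₁, sum_timeShare J p,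
    markovZVUW_timeShare hM, by rw [miUW_Z_timeShare, hpI], ?_⟩
  rw [entV_WZ_timeShare, entV_Z_eq_entV_WZ_add_miVW_Z hJ.1]
  have := mul_le_mul_of_nonneg_left (miVW_Z_le_miUW_Z hJ.1 hM) (sub_nonneg.2 hp₁)
  linarith

end TimeSharing

end DHT

theorem statement_14_general {Uu V Z : Type} [Fintype Uu] [Fintype V] [Fintype Z]
    (P : Uu × V × Z → ℝ) (c : ℝ) :
    sInf {r | ∃ (nw : ℕ) (J : (Uu × V × Z) × Fin nw → ℝ),
      IsPMF J ∧ (∀ x, (∑ w, J (x, w)) = P x) ∧ MarkovZVUW J ∧ miUW_VZ J ≤ c ∧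
      r = max (entV_WZ J) (entV_WZ J + miUW_Z J - c)} =
    sInf {r | ∃ (nw : ℕ) (J : (Uu × V × Z) × Fin nw → ℝ),
      IsPMF J ∧ (∀ x, (∑ w, J (x, w)) = P x) ∧ MarkovZVUW J ∧ miUW_Z J ≤ c ∧
      r = entV_WZ J} := by
  refine csInf_eq_csInf_of_forall_exists_le ?_ ?_
  · rintro _ ⟨nw, J, hJ, hP, hM, hI, rfl⟩
    rcases le_total (miUW_Z J) c with hIc | hcI
    · exact ⟨_, ⟨nw, J, hJ, hP, hM, hIc, rfl⟩, le_max_left _ _⟩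
    obtain ⟨J', hJ', hJ'P, hM', hI', hH'⟩ :=
      exists_timeShare_of_le_miUW_Z hJ hM ((miUW_VZ_nonneg hJ.1).trans hI) hcI
    exact ⟨_, ⟨nw + 1, J', hJ', fun x => (hJ'P x).trans (hP x), hM', hI'.le, rfl⟩,
      hH'.trans (le_max_right _ _)⟩
  · rintro _ ⟨nw, J, hJ, hP, hM, hI, rfl⟩
    exact ⟨_, ⟨nw, J, hJ, hP, hM, (miUW_VZ_le_miUW_Z hJ.1 hM).trans hI, rfl⟩,
      max_le le_rfl (by linarith)⟩

/-- For a joint pmf `P_{UVZ}` and `c ≥ 0`, the infimum over auxiliary `W`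
with `(Z,V) − U − W` and `I(U;W|V,Z) ≤ c` of
`max{H(V|W,Z), H(V|W,Z) + I(U;W|Z) − c}` equals the infimum over auxiliary `W` with
`(Z,V) − U − W` and `I(U;W|Z) ≤ c` of `H(V|W,Z)`. -/
theorem statement_14 {Uu V Z : Type} [Fintype Uu] [Fintype V] [Fintype Z]
    (P : Uu × V × Z → ℝ) (hP : IsPMF P) (c : ℝ) (hc : 0 ≤ c) :
    sInf {r | ∃ (nw : ℕ) (J : (Uu × V × Z) × Fin nw → ℝ),
      IsPMF J ∧ (∀ x, (∑ w, J (x, w)) = P x) ∧ MarkovZVUW J ∧ miUW_VZ J ≤ c ∧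
      r = max (entV_WZ J) (entV_WZ J + miUW_Z J - c)} =
    sInf {r | ∃ (nw : ℕ) (J : (Uu × V × Z) × Fin nw → ℝ),
      IsPMF J ∧ (∀ x, (∑ w, J (x, w)) = P x) ∧ MarkovZVUW J ∧ miUW_Z J ≤ c ∧
      r = entV_WZ J} :=
  statement_14_general P c
end
end

section
/- Let (U,V,Z,W) be random variables on finite sets, let w₀ be a symbol not in the range 𝒲 of W, let p ∈ [0,1], and let B be a Bernoulli(p) random variable independent of (U,V,Z,W). Define W̄ = W if B = 0 and W̄ = w₀ if B = 1. Then I(U;W̄|Z) = (1−p)·I(U;W|Z), H(V|W̄,Z) = (1−p)·H(V|W,Z) + p·H(V|Z), and if (Z,V)−U−W is a Markov chain then so is (Z,V)−U−W̄. -/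
open Filter Real

noncomputable section

open DHT Filter Real

private lemma logb_div_self' (d : ℝ) : Real.logb 2 (d / d) = 0 := by
  rcases eq_or_ne d 0 with h | h
  · simp [h]
  · simp [div_self h]

private lemma aux_scale (c q A B C : ℝ) :
    (c * q) * Real.logb 2 ((c * q) * A / (B * (c * C)))
      = c * (q * Real.logb 2 (q * A / (B * C))) := by
  rcases eq_or_ne c 0 with h | h
  · simp [h]
  · rw [show (c * q) * A = c * (q * A) by ring, show B * (c * C) = c * (B * C) by ring,
      mul_div_mul_left _ _ h]
    ring

private lemma aux_scale2 (c q T : ℝ) :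
    (c * q) * Real.logb 2 ((c * q) / (c * T)) = c * (q * Real.logb 2 (q / T)) := by
  rcases eq_or_ne c 0 with h | h
  · simp [h]
  · rw [mul_div_mul_left _ _ h]; ring

private lemma aux_none (c B A : ℝ) :
    (c * B) * Real.logb 2 ((c * B) * A / (B * (c * A))) = 0 := by
  rw [show (c * B) * A = B * (c * A) by ring, logb_div_self', mul_zero]

private lemma sum_option_prod {α β γ : Type*} [Fintype α] [Fintype β] [Fintype γ]
    (F : α × Option β × γ → ℝ) :
    ∑ x : α × Option β × γ, F x
      = (∑ x : α × γ, F (x.1, none, x.2)) + ∑ x : α × β × γ, F (x.1, some x.2.1, x.2.2) := by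
  simp [Fintype.sum_prod_type, Fintype.sum_option, Finset.sum_add_distrib]

/-- Let `W̄ = W` with probability `1−p` and `W̄ = w₀ ∉ 𝒲` with
probability `p`, where the Bernoulli choice is independent of `(U,V,Z,W)`.  Then
`I(U;W̄|Z) = (1−p)·I(U;W|Z)`, `H(V|W̄,Z) = (1−p)·H(V|W,Z) + p·H(V|Z)`, and the Markov
chain `(Z,V) − U − W` is preserved. -/
theorem statement_16 {Uu V Z Wt : Type}
    [Fintype Uu] [Fintype V] [Fintype Z] [Fintype Wt]
    (J : (Uu × V × Z) × Wt → ℝ) (hJ : IsPMF J)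
    (p : ℝ) (hp0 : 0 ≤ p) (hp1 : p ≤ 1)
    (J' : (Uu × V × Z) × Option Wt → ℝ)
    (hJ's : ∀ x w, J' (x, some w) = (1 - p) * J (x, w))
    (hJ'n : ∀ x, J' (x, none) = p * ∑ w, J (x, w)) :
    miUW_Z J' = (1 - p) * miUW_Z J ∧
    entV_WZ J' = (1 - p) * entV_WZ J + p * entV_Z (fun x => ∑ w, J (x, w)) ∧
    (MarkovZVUW J → MarkovZVUW J') := by
  classical
  have hQs : ∀ (u : Uu) (w : Wt) (z : Z),
      (∑ v, J' ((u, v, z), some w)) = (1 - p) * ∑ v, J ((u, v, z), w) := by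
    intro u w z; simp [hJ's, Finset.mul_sum]
  have hQn : ∀ (u : Uu) (z : Z),
      (∑ v, J' ((u, v, z), none)) = p * ∑ b : Wt, ∑ v, J ((u, v, z), b) := by
    intro u z
    simp only [hJ'n, ← Finset.mul_sum]
    rw [Finset.sum_comm]
  have m1 : ∀ (u : Uu) (z : Z),
      (∑ b : Option Wt, ∑ v, J' ((u, v, z), b)) = ∑ b : Wt, ∑ v, J ((u, v, z), b) := by
    intro u z
    rw [Fintype.sum_option, hQn]
    simp only [hQs, ← Finset.mul_sum]
    ring
  refine ⟨?_, ?_, ?_⟩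
  · -- I(U;W̄|Z) = (1-p)·I(U;W|Z)
    have step : condMI (fun x : Uu × Option Wt × Z => ∑ v, J' ((x.1, v, x.2.2), x.2.1))
        = ∑ x : Uu × Option Wt × Z, Option.elim x.2.1 0 (fun w =>
            (1 - p) * ((∑ v, J ((x.1, v, x.2.2), w)) *
              Real.logb 2 ((∑ v, J ((x.1, v, x.2.2), w)) *
                  (∑ a, ∑ b : Wt, ∑ v, J ((a, v, x.2.2), b)) /
                ((∑ b : Wt, ∑ v, J ((x.1, v, x.2.2), b)) *
                  (∑ a, ∑ v, J ((a, v, x.2.2), w)))))) := by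
      unfold condMI
      apply Finset.sum_congr rfl
      rintro ⟨u, ow, z⟩ -
      cases ow with
      | none =>
          simp only [Option.elim_none, hQn, m1, ← Finset.mul_sum]
          exact aux_none p _ _
      | some w =>
          simp only [Option.elim_some, hQs, m1, ← Finset.mul_sum]
          exact aux_scale _ _ _ _ _
    unfold miUW_Z
    rw [step, sum_option_prod]
    simp only [Option.elim_none, Option.elim_some, Finset.sum_const_zero, zero_add,
      ← Finset.mul_sum]
    unfold condMI
    rfl
  · -- H(V|W̄,Z) = (1-p)·H(V|W,Z) + p·H(V|Z)
    have hRs : ∀ (v : V) (w : Wt) (z : Z),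
        (∑ u, J' ((u, v, z), some w)) = (1 - p) * ∑ u, J ((u, v, z), w) := by
      intro v w z; simp [hJ's, Finset.mul_sum]
    have hRn : ∀ (v : V) (z : Z),
        (∑ u, J' ((u, v, z), none)) = p * ∑ u, ∑ w, J ((u, v, z), w) := by
      intro v z; simp [hJ'n, Finset.mul_sum]
    have step : entV_WZ J' = -∑ x : V × Option Wt × Z, Option.elim x.2.1
        (p * ((∑ u, ∑ w, J ((u, x.1, x.2.2), w)) *
          Real.logb 2 ((∑ u, ∑ w, J ((u, x.1, x.2.2), w)) /
            ∑ a, ∑ u, ∑ w, J ((u, a, x.2.2), w))))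
        (fun w => (1 - p) * ((∑ u, J ((u, x.1, x.2.2), w)) *
          Real.logb 2 ((∑ u, J ((u, x.1, x.2.2), w)) /
            ∑ a, ∑ u, J ((u, a, x.2.2), w)))) := by
      unfold entV_WZ condEntropy
      refine neg_inj.mpr (Finset.sum_congr rfl ?_)
      rintro ⟨v, ow, z⟩ -
      cases ow with
      | none =>
          simp only [Option.elim_none, hRn, ← Finset.mul_sum]
          exact aux_scale2 _ _ _
      | some w =>
          simp only [Option.elim_some, hRs, ← Finset.mul_sum]
          exact aux_scale2 _ _ _
    have eW : entV_WZ J = -∑ x : V × Wt × Z,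
        ((∑ u, J ((u, x.1, x.2.2), x.2.1)) *
          Real.logb 2 ((∑ u, J ((u, x.1, x.2.2), x.2.1)) /
            ∑ a, ∑ u, J ((u, a, x.2.2), x.2.1))) := by
      unfold entV_WZ condEntropy; rfl
    have eN : entV_Z (fun x => ∑ w, J (x, w)) = -∑ x : V × Z,
        ((∑ u, ∑ w, J ((u, x.1, x.2), w)) *
          Real.logb 2 ((∑ u, ∑ w, J ((u, x.1, x.2), w)) /
            ∑ a, ∑ u, ∑ w, J ((u, a, x.2), w))) := by
      unfold entV_Z condEntropy; rfl
    rw [step, sum_option_prod, eW, eN]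
    simp only [Option.elim_none, Option.elim_some, ← Finset.mul_sum]
    ring
  · -- Markov chain preservation
    have hm : ∀ x, (∑ c' : Option Wt, J' (x, c')) = ∑ w, J (x, w) := by
      intro x
      rw [Fintype.sum_option]
      simp only [hJ's, hJ'n, ← Finset.mul_sum]
      ring
    intro h a b c
    simp only [MarkovZVUW, MarkovChain] at h ⊢
    cases c with
    | none =>
      simp only [hm, hJ'n, ← Finset.mul_sum]
      ring
    | some w =>
      simp only [hm, hJ's, ← Finset.mul_sum]
      nlinarith [h a b w]
end
end
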